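/- arXiv:2411.09501 — 6 statements merged into one kernel-verified Lean document; each statement's English description precedes it below -/
import Mathlib

section
/- The submodule of irregular elementary paths I_n(V;R) ⊆ Λ_n(V;R) (spanned by paths with v_{i-1} = v_i for some i) is preserved by the path differential: ∂_n(I_n(V;R)) ⊆ I_{n-1}(V;R). Hence the path differential descends to the quotient R_n(V;R) = Λ_n(V;R)/I_n(V;R) and makes it a chain complex. -/
open Finsupp

/-- The differential `∂_{n+1} = Σ (-1)^i ∂_{n+1,i}` of the full elementary path complex
`Λ_*(V;R)`, where `∂_{n+1,i}` deletes the `i`-th vertex of a path. -/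
noncomputable def fullBoundary (V : Type) (R : Type) [CommRing R] (n : ℕ) :
    ((Fin (n+2) → V) →₀ R) →ₗ[R] ((Fin (n+1) → V) →₀ R) :=
  ∑ i : Fin (n+2), ((-1 : R)^(i : ℕ)) • Finsupp.lmapDomain R R (fun p => p ∘ i.succAbove)

/-- The submodule `I_n(V;R)` of `Λ_n(V;R)` spanned by the irregular elementary paths,
i.e. those with two equal consecutive vertices. -/
noncomputable def Irreg (V : Type) (R : Type) [CommRing R] (n : ℕ) :
    Submodule R ((Fin (n+1) → V) →₀ R) :=
  Submodule.span R {f | ∃ p : Fin (n+1) → V,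
    (∃ i : Fin n, p i.castSucc = p i.succ) ∧ f = Finsupp.single p 1}

lemma succAbove_val' {n : ℕ} (i : Fin (n+2)) (k : Fin (n+1)) :
    ((i.succAbove k : Fin (n+2)) : ℕ) = if (k:ℕ) < i then (k:ℕ) else k+1 := by
  rw [Fin.succAbove]
  split_ifs with h1 h2 h3 <;> simp_all [Fin.lt_def]

lemma exists_rep {n : ℕ} (i : Fin (n+2)) (j : Fin (n+1))
    (h1 : i ≠ j.castSucc) (h2 : i ≠ j.succ) :
    ∃ k : Fin n, i.succAbove k.castSucc = j.castSucc ∧ i.succAbove k.succ = j.succ := by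
  have hv1 : (i:ℕ) ≠ (j:ℕ) := fun h => h1 (Fin.ext (by simpa using h))
  have hv2 : (i:ℕ) ≠ (j:ℕ)+1 := fun h => h2 (Fin.ext (by simpa using h))
  have hi : (i:ℕ) < n+2 := i.isLt
  have hj : (j:ℕ) < n+1 := j.isLt
  rcases lt_or_gt_of_ne hv1 with hlt | hgt
  · have hj1 : 1 ≤ (j:ℕ) := by omega
    refine ⟨⟨(j:ℕ)-1, by omega⟩, Fin.ext ?_, Fin.ext ?_⟩ <;>
    · rw [succAbove_val']
      simp only [Fin.coe_castSucc, Fin.val_succ, Fin.mk_lt_mk]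
      split_ifs <;> omega
  · have : (j:ℕ)+1 < (i:ℕ) := by omega
    refine ⟨⟨(j:ℕ), by omega⟩, Fin.ext ?_, Fin.ext ?_⟩ <;>
    · rw [succAbove_val']
      simp only [Fin.coe_castSucc, Fin.val_succ, Fin.mk_lt_mk]
      split_ifs <;> omega

lemma comp_succAbove_eq {n : ℕ} {V : Type} (p : Fin (n+2) → V) (j : Fin (n+1))
    (hj : p j.castSucc = p j.succ) :
    p ∘ (j.castSucc).succAbove = p ∘ (j.succ).succAbove := by
  funext k
  simp only [Function.comp_apply]
  rcases lt_trichotomy (k:ℕ) (j:ℕ) with h | h | h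
  · congr 1
    apply Fin.ext
    rw [succAbove_val', succAbove_val']
    simp only [Fin.coe_castSucc, Fin.val_succ]
    split_ifs <;> omega
  · have e1 : (j.castSucc).succAbove k = j.succ := by
      apply Fin.ext; rw [succAbove_val']
      simp only [Fin.coe_castSucc, Fin.val_succ]
      split_ifs <;> omega
    have e2 : (j.succ).succAbove k = j.castSucc := by
      apply Fin.ext; rw [succAbove_val']
      simp only [Fin.coe_castSucc, Fin.val_succ]
      split_ifs <;> omega
    rw [e1, e2, hj]
  · congr 1
    apply Fin.ext
    rw [succAbove_val', succAbove_val']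
    simp only [Fin.coe_castSucc, Fin.val_succ]
    split_ifs <;> omega

/-- The path differential preserves the submodule of irregular paths:
`∂_{n+1}(I_{n+1}(V;R)) ⊆ I_n(V;R)`; hence it descends to the quotient
`R_n(V;R) = Λ_n(V;R)/I_n(V;R)`, making it a chain complex. -/
theorem fullBoundary_irreg (V : Type) (R : Type) [CommRing R] (n : ℕ)
    (x : (Fin (n+2) → V) →₀ R) (hx : x ∈ Irreg V R (n+1)) :
    fullBoundary V R n x ∈ Irreg V R n := by
  refine Submodule.span_induction ?_ ?_ ?_ ?_ hx
  · rintro f ⟨p, ⟨j, hj⟩, rfl⟩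
    have hval : fullBoundary V R n (Finsupp.single p 1) =
        ∑ i : Fin (n+2), ((-1:R)^(i:ℕ)) • Finsupp.single (p ∘ i.succAbove) 1 := by
      rw [fullBoundary, LinearMap.sum_apply]
      refine Finset.sum_congr rfl fun i _ => ?_
      rw [LinearMap.smul_apply, Finsupp.lmapDomain_apply, Finsupp.mapDomain_single]
    rw [hval]
    set T : Fin (n+2) → ((Fin (n+1) → V) →₀ R) :=
      fun i => ((-1:R)^(i:ℕ)) • Finsupp.single (p ∘ i.succAbove) 1 with hT
    have hne : j.succ ∈ (Finset.univ.erase j.castSucc) := by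
      simp [Finset.mem_erase, (Fin.castSucc_lt_succ : j.castSucc < j.succ).ne']
    have hsplit : ∑ i : Fin (n+2), T i =
        T j.castSucc + (T j.succ + ∑ i ∈ (Finset.univ.erase j.castSucc).erase j.succ, T i) := by
      rw [Finset.add_sum_erase _ T hne, Finset.add_sum_erase _ T (Finset.mem_univ _)]
    rw [hsplit]
    have hcancel : T j.castSucc + T j.succ = 0 := by
      rw [hT]
      simp only [comp_succAbove_eq p j hj, Fin.coe_castSucc, Fin.val_succ, pow_succ]
      rw [← add_smul]
      ring_nf
      simp
    rw [← add_assoc, hcancel, zero_add]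
    refine Submodule.sum_mem _ fun i hi => ?_
    simp only [Finset.mem_erase, Finset.mem_univ, and_true] at hi
    obtain ⟨k, hk1, hk2⟩ := exists_rep i j hi.2 hi.1
    refine Submodule.smul_mem _ _ (Submodule.subset_span ?_)
    exact ⟨p ∘ i.succAbove, ⟨k, by simp only [Function.comp_apply, hk1, hk2]; exact hj⟩, rfl⟩
  · simp
  · intro a b _ _ ha hb; rw [map_add]; exact Submodule.add_mem _ ha hb
  · intro r a _ ha; rw [map_smul]; exact Submodule.smul_mem _ r ha
end

section
/- Let G be a digraph and x ∈ A_n(G;R) an allowed chain. Then x ∈ Ω_n(G;R) if and only if ∂^M_{n,n,i}(x) = 0 for every i = 1, …, n−1, where ∂^M_{n,n,i} is the i-th partial magnitude differential. In other words, membership in the path chain module is equivalent to the vanishing of each individual face map ∂^M_{n,n,i}, not just their alternating sum. -/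
open Finsupp

/-- `p` is an allowed `d`-path in the digraph `(V, E)`: consecutive vertices are joined by
edges. -/
def IsAllowed (V : Type) (E : V → V → Prop) (d : ℕ) (p : Fin (d+1) → V) : Prop :=
  ∀ i : Fin d, E (p i.castSucc) (p i.succ)

/-- An allowed path condition for tuples of length `d` (i.e. `(d-1)`-paths). -/
def IsAllowedLow (V : Type) (E : V → V → Prop) (d : ℕ) (q : Fin d → V) : Prop :=
  ∀ j : Fin (d-1), E (q ⟨j.val, by have := j.isLt; omega⟩) (q ⟨j.val+1, by have := j.isLt; omega⟩)

/-- Regularity (no repeated consecutive vertices) for tuples of length `d`. -/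
def IsRegularLow (V : Type) (d : ℕ) (q : Fin d → V) : Prop :=
  ∀ j : Fin (d-1), q ⟨j.val, by have := j.isLt; omega⟩ ≠ q ⟨j.val+1, by have := j.isLt; omega⟩

open Classical in
/-- The path differential `∂^P_d` on the regular path complex: the alternating sum of the
face maps deleting the `i`-th vertex, where a face is declared zero if the resulting path
is irregular. -/
noncomputable def pathBoundary (V : Type) (R : Type) [CommRing R] (d : ℕ) :
    ((Fin (d+1) → V) →₀ R) →ₗ[R] ((Fin d → V) →₀ R) :=
  ∑ i : Fin (d+1), ((-1 : R)^(i : ℕ)) •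
    ((Finsupp.lsum R fun p : Fin (d+1) → V =>
      if IsRegularLow V d (p ∘ i.succAbove) then Finsupp.lsingle (p ∘ i.succAbove)
      else (0 : R →ₗ[R] ((Fin d → V) →₀ R))) : ((Fin (d+1) → V) →₀ R) →ₗ[R] ((Fin d → V) →₀ R))

/-- The path chain module `Ω_d(G;R)`: allowed `d`-chains whose path boundary is again an
allowed chain. -/
noncomputable def Omega (V : Type) (E : V → V → Prop) (R : Type) [CommRing R] (d : ℕ) :
    Submodule R ((Fin (d+1) → V) →₀ R) :=
  Finsupp.supported R R {p | IsAllowed V E d p} ⊓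
    Submodule.comap (pathBoundary V R d) (Finsupp.supported R R {q | IsAllowedLow V E d q})

/-- The natural quasi-metric of a digraph: the minimal length of an allowed path from `u`
to `w`, and `∞` if there is no such path. -/
noncomputable def dG (V : Type) (E : V → V → Prop) (u w : V) : ℕ∞ :=
  sInf {m : ℕ∞ | ∃ n : ℕ, m = n ∧ ∃ p : Fin (n+1) → V,
    p 0 = u ∧ p (Fin.last n) = w ∧ IsAllowed V E n p}

open Classical in
/-- The partial magnitude differential `∂^M_{d,d,i+1}` (deleting the interior vertex at
position `i+1`) on diagonal magnitude chains, identified with spans of tuples: the vertex is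
deleted when the triangle inequality is an equality, otherwise the tuple is sent to `0`. -/
noncomputable def magFace (V : Type) (E : V → V → Prop) (R : Type) [CommRing R]
    (d : ℕ) (i : Fin (d-1)) :
    ((Fin (d+1) → V) →₀ R) →ₗ[R] ((Fin d → V) →₀ R) :=
  Finsupp.lsum R fun p : Fin (d+1) → V =>
    if dG V E (p ⟨i.val, by have := i.isLt; omega⟩) (p ⟨i.val+1, by have := i.isLt; omega⟩)
        + dG V E (p ⟨i.val+1, by have := i.isLt; omega⟩) (p ⟨i.val+2, by have := i.isLt; omega⟩)
        = dG V E (p ⟨i.val, by have := i.isLt; omega⟩) (p ⟨i.val+2, by have := i.isLt; omega⟩)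
    then Finsupp.lsingle (p ∘ Fin.succAbove ⟨i.val+1, by have := i.isLt; omega⟩)
    else (0 : R →ₗ[R] ((Fin d → V) →₀ R))

section aux
variable {V : Type} {E : V → V → Prop}

lemma dG_self (u : V) : dG V E u u = 0 := by
  apply le_antisymm _ zero_le
  apply sInf_le
  exact ⟨0, by simp, fun _ => u, rfl, rfl, fun i => i.elim0⟩

lemma dG_le_one {u v : V} (h : E u v) : dG V E u v ≤ 1 := by
  apply sInf_le
  refine ⟨1, by simp, ![u, v], rfl, rfl, ?_⟩
  intro i
  fin_cases i
  simpa using h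

lemma dG_le_two {u v w : V} (h1 : E u v) (h2 : E v w) : dG V E u w ≤ 2 := by
  apply sInf_le
  refine ⟨2, by simp, ![u, v, w], rfl, rfl, ?_⟩
  intro i
  fin_cases i <;> simp [Matrix.cons_val_zero, Matrix.cons_val_one] <;> assumption

lemma one_le_dG {u v : V} (h : u ≠ v) : 1 ≤ dG V E u v := by
  apply le_sInf
  rintro m ⟨n, rfl, p, h0, hl, hp⟩
  by_contra hlt
  push_neg at hlt
  have hn : n = 0 := by exact_mod_cast Nat.lt_one_iff.mp (by exact_mod_cast hlt)
  subst hn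
  exact h (h0 ▸ hl ▸ rfl)

lemma two_le_dG {u w : V} (h : u ≠ w) (hE : ¬ E u w) : 2 ≤ dG V E u w := by
  apply le_sInf
  rintro m ⟨n, rfl, p, h0, hl, hp⟩
  by_contra hlt
  push_neg at hlt
  have hn : n < 2 := by exact_mod_cast hlt
  interval_cases n
  · exact h (h0 ▸ hl ▸ rfl)
  · apply hE
    have := hp 0
    have e0 : p (Fin.castSucc 0) = u := h0
    have e1 : p (Fin.succ 0) = w := hl
    rw [e0, e1] at this
    exact this

lemma dG_eq_one {u v : V} (h : E u v) (hne : u ≠ v) : dG V E u v = 1 :=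
  le_antisymm (dG_le_one h) (one_le_dG hne)

lemma triangle_iff (hirr : ∀ u v, E u v → u ≠ v) {u v w : V} (h1 : E u v) (h2 : E v w) :
    dG V E u v + dG V E v w = dG V E u w ↔ (u ≠ w ∧ ¬ E u w) := by
  rw [dG_eq_one h1 (hirr _ _ h1), dG_eq_one h2 (hirr _ _ h2)]
  have h11 : (1 : ℕ∞) + 1 = 2 := by norm_num
  rw [h11]
  constructor
  · intro h
    constructor
    · rintro rfl
      rw [dG_self] at h
      norm_num at h
    · intro hE
      have := dG_le_one (E := E) hE
      rw [← h] at this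
      norm_num at this
  · rintro ⟨hne, hnE⟩
    exact (le_antisymm (dG_le_two h1 h2) (two_le_dG hne hnE)).symm

end aux
section face
variable {V : Type} {E : V → V → Prop} {d : ℕ}

lemma succAbove_mk (j : Fin (d+1)) (k : ℕ) (hk : k < d) :
    j.succAbove ⟨k, hk⟩ = if h : k < j.val then ⟨k, by omega⟩ else ⟨k+1, by omega⟩ := by
  rw [Fin.succAbove]
  by_cases h : k < j.val
  · rw [dif_pos h, if_pos (by simpa [Fin.lt_def] using h)]
    rfl
  · rw [dif_neg h, if_neg (by simpa [Fin.lt_def] using h)]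
    rfl

lemma allowed_pair {p : Fin (d+1) → V} (hp : IsAllowed V E d p) (a : ℕ) (h : a < d) :
    E (p ⟨a, by omega⟩) (p ⟨a+1, by omega⟩) :=
  hp ⟨a, h⟩

/-- Consecutive pairs of the face away from the deleted position are edges. -/
lemma face_pair_ne {p : Fin (d+1) → V} (hp : IsAllowed V E d p) (j : Fin (d+1))
    (k : Fin (d-1)) (hne : k.val + 1 ≠ j.val) :
    E ((p ∘ j.succAbove) ⟨k.val, by have := k.isLt; omega⟩)
      ((p ∘ j.succAbove) ⟨k.val+1, by have := k.isLt; omega⟩) := by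
  have hk := k.isLt
  simp only [Function.comp_apply]
  rw [succAbove_mk, succAbove_mk]
  rcases lt_or_ge k.val j.val with h | h
  · rcases lt_or_ge (k.val+1) j.val with h' | h'
    · rw [dif_pos h, dif_pos h']
      exact allowed_pair hp k.val (by omega)
    · omega
  · rw [dif_neg (by omega), dif_neg (by omega)]
    exact allowed_pair hp (k.val+1) (by omega)

lemma face_mid_left (p : Fin (d+1) → V) (i : Fin (d-1)) :
    (p ∘ Fin.succAbove ⟨i.val+1, by have := i.isLt; omega⟩) ⟨i.val, by have := i.isLt; omega⟩
      = p ⟨i.val, by have := i.isLt; omega⟩ := by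
  simp only [Function.comp_apply]
  rw [succAbove_mk, dif_pos (Nat.lt_succ_self i.val)]

lemma face_mid_right (p : Fin (d+1) → V) (i : Fin (d-1)) :
    (p ∘ Fin.succAbove ⟨i.val+1, by have := i.isLt; omega⟩) ⟨i.val+1, by have := i.isLt; omega⟩
      = p ⟨i.val+2, by have := i.isLt; omega⟩ := by
  simp only [Function.comp_apply]
  rw [succAbove_mk, dif_neg (lt_irrefl (i.val+1))]

lemma face_endpoint_allowedLow {p : Fin (d+1) → V} (hp : IsAllowed V E d p) (j : Fin (d+1))
    (hj : j.val = 0 ∨ j.val = d) : IsAllowedLow V E d (p ∘ j.succAbove) := by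
  intro k
  exact face_pair_ne hp j k (by have := k.isLt; omega)

lemma face_mid_allowedLow_of_E {p : Fin (d+1) → V} (hp : IsAllowed V E d p) (i : Fin (d-1))
    (hE : E (p ⟨i.val, by have := i.isLt; omega⟩) (p ⟨i.val+2, by have := i.isLt; omega⟩)) :
    IsAllowedLow V E d (p ∘ Fin.succAbove ⟨i.val+1, by have := i.isLt; omega⟩) := by
  intro k
  by_cases hk : k = i
  · subst hk
    rw [face_mid_left, face_mid_right]
    exact hE
  · exact face_pair_ne hp _ k (show k.val+1 ≠ i.val+1 from
      fun h => hk (Fin.ext (Nat.succ_injective h)))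

end face
section bad
variable {V : Type} {E : V → V → Prop} {d : ℕ}

/-- `q` is "bad at `i`": the `i`-th consecutive pair is not an edge but all others are. -/
def Bad (E : V → V → Prop) (d : ℕ) (i : Fin (d-1)) (q : Fin d → V) : Prop :=
  ¬ E (q ⟨i.val, by have := i.isLt; omega⟩) (q ⟨i.val+1, by have := i.isLt; omega⟩) ∧
  ∀ j : Fin (d-1), j ≠ i →
    E (q ⟨j.val, by have := j.isLt; omega⟩) (q ⟨j.val+1, by have := j.isLt; omega⟩)

lemma Bad.not_allowedLow {i : Fin (d-1)} {q : Fin d → V} (h : Bad E d i q) :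
    ¬ IsAllowedLow V E d q :=
  fun ha => h.1 (ha i)

lemma Bad.unique {i i' : Fin (d-1)} {q : Fin d → V} (h : Bad E d i q) (h' : Bad E d i' q) :
    i = i' := by
  by_contra hne
  exact h'.1 (h.2 i' (Ne.symm hne))

lemma face_mid_bad {p : Fin (d+1) → V} (hp : IsAllowed V E d p) (i : Fin (d-1))
    (hnE : ¬ E (p ⟨i.val, by have := i.isLt; omega⟩) (p ⟨i.val+2, by have := i.isLt; omega⟩)) :
    Bad E d i (p ∘ Fin.succAbove ⟨i.val+1, by have := i.isLt; omega⟩) := by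
  constructor
  · rw [face_mid_left, face_mid_right]
    exact hnE
  · intro j hj
    exact face_pair_ne hp _ j (show j.val+1 ≠ i.val+1 from
      fun h => hj (Fin.ext (Nat.succ_injective h)))

lemma reg_face_iff (hirr : ∀ u v, E u v → u ≠ v) {p : Fin (d+1) → V}
    (hp : IsAllowed V E d p) (i : Fin (d-1)) :
    IsRegularLow V d (p ∘ Fin.succAbove ⟨i.val+1, by have := i.isLt; omega⟩) ↔
      p ⟨i.val, by have := i.isLt; omega⟩ ≠ p ⟨i.val+2, by have := i.isLt; omega⟩ := by
  constructor
  · intro hr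
    have := hr i
    rwa [face_mid_left, face_mid_right] at this
  · intro hne j
    by_cases hj : j = i
    · subst hj
      rw [face_mid_left, face_mid_right]
      exact hne
    · exact hirr _ _ (face_pair_ne hp _ j (show j.val+1 ≠ i.val+1 from
        fun h => hj (Fin.ext (Nat.succ_injective h))))

/-- The triangle-equality condition of `magFace`, for an allowed path. -/
lemma cond_iff (hirr : ∀ u v, E u v → u ≠ v) {p : Fin (d+1) → V}
    (hp : IsAllowed V E d p) (i : Fin (d-1)) :
    (dG V E (p ⟨i.val, by have := i.isLt; omega⟩) (p ⟨i.val+1, by have := i.isLt; omega⟩)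
        + dG V E (p ⟨i.val+1, by have := i.isLt; omega⟩) (p ⟨i.val+2, by have := i.isLt; omega⟩)
        = dG V E (p ⟨i.val, by have := i.isLt; omega⟩) (p ⟨i.val+2, by have := i.isLt; omega⟩))
      ↔ (p ⟨i.val, by have := i.isLt; omega⟩ ≠ p ⟨i.val+2, by have := i.isLt; omega⟩ ∧
          ¬ E (p ⟨i.val, by have := i.isLt; omega⟩) (p ⟨i.val+2, by have := i.isLt; omega⟩)) := by
  have h1 : E (p ⟨i.val, by have := i.isLt; omega⟩) (p ⟨i.val+1, by have := i.isLt; omega⟩) :=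
    allowed_pair hp i.val (by have := i.isLt; omega)
  have h2 : E (p ⟨i.val+1, by have := i.isLt; omega⟩) (p ⟨i.val+2, by have := i.isLt; omega⟩) :=
    allowed_pair hp (i.val+1) (by have := i.isLt; omega)
  exact triangle_iff hirr h1 h2

end bad
section eval
open Classical
variable {V : Type} {E : V → V → Prop} {R : Type} [CommRing R] {d : ℕ}

lemma magFace_apply (i : Fin (d-1)) (x : (Fin (d+1) → V) →₀ R) (q : Fin d → V) :
    magFace V E R d i x q =
      ∑ p ∈ x.support,
        (if dG V E (p ⟨i.val, by have := i.isLt; omega⟩) (p ⟨i.val+1, by have := i.isLt; omega⟩)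
            + dG V E (p ⟨i.val+1, by have := i.isLt; omega⟩) (p ⟨i.val+2, by have := i.isLt; omega⟩)
            = dG V E (p ⟨i.val, by have := i.isLt; omega⟩) (p ⟨i.val+2, by have := i.isLt; omega⟩)
          then (if (p ∘ Fin.succAbove ⟨i.val+1, by have := i.isLt; omega⟩) = q then x p else 0)
          else 0) := by
  rw [magFace, Finsupp.lsum_apply, Finsupp.sum_apply, Finsupp.sum]
  refine Finset.sum_congr rfl fun p _ => ?_
  split_ifs with h h'
  · simp [h']
  · simp [Finsupp.single_apply, h']
  · simp

lemma pathBoundary_apply (x : (Fin (d+1) → V) →₀ R) (q : Fin d → V) :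
    pathBoundary V R d x q =
      ∑ j : Fin (d+1), (-1 : R)^(j : ℕ) *
        ∑ p ∈ x.support,
          (if IsRegularLow V d (p ∘ j.succAbove)
            then (if (p ∘ j.succAbove) = q then x p else 0) else 0) := by
  rw [pathBoundary, LinearMap.sum_apply, Finsupp.finset_sum_apply]
  refine Finset.sum_congr rfl fun j _ => ?_
  rw [LinearMap.smul_apply, Finsupp.smul_apply, smul_eq_mul]
  congr 1
  rw [Finsupp.lsum_apply, Finsupp.sum_apply, Finsupp.sum]
  refine Finset.sum_congr rfl fun p _ => ?_
  split_ifs with h h'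
  · simp [h']
  · simp [Finsupp.single_apply, h']
  · simp

lemma sum_interior {M : Type*} [AddCommMonoid M] {d : ℕ} (f : Fin (d+1) → M)
    (h0 : ∀ j : Fin (d+1), j.val = 0 ∨ j.val = d → f j = 0) :
    ∑ j : Fin (d+1), f j = ∑ i : Fin (d-1), f ⟨i.val+1, by have := i.isLt; omega⟩ := by
  rcases Nat.eq_zero_or_pos d with hd | hd
  · subst hd
    rw [Fin.sum_univ_one, h0 0 (Or.inl rfl)]
    rfl
  · obtain ⟨e, rfl⟩ : ∃ e, d = e + 1 := ⟨d-1, by omega⟩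
    set F : ℕ → M := fun k => if h : k < e+2 then f ⟨k, h⟩ else 0 with hF
    have step0 : ∀ j : Fin (e+2), f j = F j.val := by
      intro j
      simp only [hF]
      rw [dif_pos j.isLt]
    calc ∑ j : Fin (e+2), f j = ∑ k ∈ Finset.range (e+2), F k := by
          rw [← Fin.sum_univ_eq_sum_range]
          exact Finset.sum_congr rfl fun j _ => step0 j
      _ = ∑ k ∈ Finset.range (e+1), F k := by
          rw [Finset.sum_range_succ]
          have : F (e+1) = 0 := by
            simp only [hF]
            rw [dif_pos (by omega)]
            exact h0 _ (Or.inr rfl)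
          rw [this, add_zero]
      _ = ∑ k ∈ Finset.range e, F (k+1) + F 0 := Finset.sum_range_succ' F e
      _ = ∑ k ∈ Finset.range e, F (k+1) := by
          have : F 0 = 0 := by
            simp only [hF]
            rw [dif_pos (by omega)]
            exact h0 _ (Or.inl rfl)
          rw [this, add_zero]
      _ = ∑ i : Fin e, F (i.val+1) := (Fin.sum_univ_eq_sum_range (fun k => F (k+1)) e).symm
      _ = ∑ i : Fin (e+1-1), f ⟨i.val+1, by have := i.isLt; omega⟩ := by
          refine Finset.sum_congr rfl fun i _ => ?_
          simp only [hF]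
          rw [dif_pos (by have := i.isLt; omega)]

lemma pathBoundary_apply_of_not (hirr : ∀ u v, E u v → u ≠ v)
    (x : (Fin (d+1) → V) →₀ R)
    (hx : x ∈ Finsupp.supported R R {p : Fin (d+1) → V | IsAllowed V E d p})
    (q : Fin d → V) (hq : ¬ IsAllowedLow V E d q) :
    pathBoundary V R d x q =
      ∑ i : Fin (d-1), (-1 : R)^(i.val+1) * magFace V E R d i x q := by
  have hall : ∀ p ∈ x.support, IsAllowed V E d p := fun p hp =>
    (Finsupp.mem_supported R x).mp hx hp
  rw [pathBoundary_apply]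
  calc ∑ j : Fin (d+1), (-1 : R)^(j : ℕ) *
          ∑ p ∈ x.support,
            (if IsRegularLow V d (p ∘ j.succAbove)
              then (if (p ∘ j.succAbove) = q then x p else 0) else 0)
      = ∑ p ∈ x.support, ∑ j : Fin (d+1), (-1 : R)^(j : ℕ) *
            (if IsRegularLow V d (p ∘ j.succAbove)
              then (if (p ∘ j.succAbove) = q then x p else 0) else 0) := by
        simp only [Finset.mul_sum]
        exact Finset.sum_comm
    _ = ∑ p ∈ x.support, ∑ i : Fin (d-1), (-1 : R)^(i.val+1) *
            (if dG V E (p ⟨i.val, by have := i.isLt; omega⟩) (p ⟨i.val+1, by have := i.isLt; omega⟩)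
                + dG V E (p ⟨i.val+1, by have := i.isLt; omega⟩) (p ⟨i.val+2, by have := i.isLt; omega⟩)
                = dG V E (p ⟨i.val, by have := i.isLt; omega⟩) (p ⟨i.val+2, by have := i.isLt; omega⟩)
              then (if (p ∘ Fin.succAbove ⟨i.val+1, by have := i.isLt; omega⟩) = q then x p else 0)
              else 0) := by
        refine Finset.sum_congr rfl fun p hp => ?_
        have hpa : IsAllowed V E d p := hall p hp
        rw [sum_interior]
        · refine Finset.sum_congr rfl fun i _ => ?_
          congr 1
          by_cases hfq : (p ∘ Fin.succAbove (⟨i.val+1, by have := i.isLt; omega⟩ : Fin (d+1))) = q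
          · have hnE : ¬ E (p ⟨i.val, by have := i.isLt; omega⟩)
                (p ⟨i.val+2, by have := i.isLt; omega⟩) := fun hE =>
              hq (hfq ▸ face_mid_allowedLow_of_E hpa i hE)
            rw [if_pos hfq]
            refine if_congr ?_ rfl rfl
            rw [reg_face_iff hirr hpa i, cond_iff hirr hpa i]
            simp [hnE]
          · simp [hfq]
        · intro j hj
          have hne : (p ∘ j.succAbove) ≠ q := fun h =>
            hq (h ▸ face_endpoint_allowedLow hpa j hj)
          simp [hne]
    _ = ∑ i : Fin (d-1), (-1 : R)^(i.val+1) * magFace V E R d i x q := by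
        simp only [magFace_apply, Finset.mul_sum]
        exact Finset.sum_comm

end eval

section main
variable {V : Type} {E : V → V → Prop} {R : Type} [CommRing R] {d : ℕ}

lemma magFace_ne_zero_bad (hirr : ∀ u v, E u v → u ≠ v) (x : (Fin (d+1) → V) →₀ R)
    (hx : x ∈ Finsupp.supported R R {p : Fin (d+1) → V | IsAllowed V E d p})
    (i : Fin (d-1)) (q : Fin d → V) (h : magFace V E R d i x q ≠ 0) :
    Bad E d i q := by
  rw [magFace_apply] at h
  obtain ⟨p, hp, hterm⟩ := Finset.exists_ne_zero_of_sum_ne_zero h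
  have hpa : IsAllowed V E d p := (Finsupp.mem_supported R x).mp hx hp
  by_cases hc : dG V E (p ⟨i.val, by have := i.isLt; omega⟩) (p ⟨i.val+1, by have := i.isLt; omega⟩)
      + dG V E (p ⟨i.val+1, by have := i.isLt; omega⟩) (p ⟨i.val+2, by have := i.isLt; omega⟩)
      = dG V E (p ⟨i.val, by have := i.isLt; omega⟩) (p ⟨i.val+2, by have := i.isLt; omega⟩)
  · rw [if_pos hc] at hterm
    by_cases hf : (p ∘ Fin.succAbove ⟨i.val+1, by have := i.isLt; omega⟩) = q
    · have hnE := ((cond_iff hirr hpa i).mp hc).2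
      exact hf ▸ face_mid_bad hpa i hnE
    · exact absurd (if_neg hf) hterm
  · exact absurd (if_neg hc) hterm

end main

/-- For an allowed chain `x ∈ A_d(G;R)`, membership in the path chain
module `Ω_d(G;R)` is equivalent to the vanishing of every individual partial magnitude
differential `∂^M_{d,d,i}` for `i = 1, …, d-1`, not just of their alternating sum. -/
theorem mem_Omega_iff_magFace_eq_zero (V : Type) (E : V → V → Prop)
    (hirr : ∀ u v, E u v → u ≠ v) (R : Type) [CommRing R] (d : ℕ)
    (x : (Fin (d+1) → V) →₀ R)
    (hx : x ∈ Finsupp.supported R R {p : Fin (d+1) → V | IsAllowed V E d p}) :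
    x ∈ Omega V E R d ↔ ∀ i : Fin (d-1), magFace V E R d i x = 0 := by
  constructor
  · intro hO i
    have hb : pathBoundary V R d x ∈
        Finsupp.supported R R {q : Fin d → V | IsAllowedLow V E d q} :=
      Submodule.mem_comap.mp (Submodule.mem_inf.mp hO).2
    have hb' := (Finsupp.mem_supported' R (pathBoundary V R d x)).mp hb
    ext q
    rw [Finsupp.coe_zero, Pi.zero_apply]
    by_contra hne
    have hbad : Bad E d i q := magFace_ne_zero_bad hirr x hx i q hne
    have h0 : pathBoundary V R d x q = 0 := hb' q hbad.not_allowedLow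
    rw [pathBoundary_apply_of_not hirr x hx q hbad.not_allowedLow] at h0
    rw [Finset.sum_eq_single i ?h1 ?h2] at h0
    · have hu : (-1 : R)^(i.val+1) * ((-1 : R)^(i.val+1) * magFace V E R d i x q)
          = magFace V E R d i x q := by
        rw [← mul_assoc, ← pow_add]
        have hev : Even (i.val+1 + (i.val+1)) := ⟨i.val+1, rfl⟩
        rw [hev.neg_one_pow, one_mul]
      rw [h0, mul_zero] at hu
      exact hne hu.symm
    case h1 =>
      intro i' _ hne'
      by_contra h'
      have hmz : magFace V E R d i' x q ≠ 0 := fun h0' => h' (by rw [h0', mul_zero])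
      exact hne' ((magFace_ne_zero_bad hirr x hx i' q hmz).unique hbad)
    case h2 =>
      intro hni
      exact absurd (Finset.mem_univ i) hni
  · intro h
    refine Submodule.mem_inf.mpr ⟨hx, ?_⟩
    rw [Submodule.mem_comap]
    refine (Finsupp.mem_supported' R (pathBoundary V R d x)).mpr ?_
    intro q hq
    rw [pathBoundary_apply_of_not hirr x hx q hq]
    refine Finset.sum_eq_zero fun i _ => ?_
    rw [h i, Finsupp.coe_zero, Pi.zero_apply, mul_zero]
end

section
/- The double edges, directed triangles, and directed squares generate Ω_2(G;R) as an R-module, for any digraph G and any commutative ring R with unit. -/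
open Finsupp

section Aux

variable {V R : Type} [CommRing R] {E : V → V → Prop}

/-- The generating set. -/
def genSet (V : Type) (E : V → V → Prop) (R : Type) [CommRing R] : Set ((Fin 3 → V) →₀ R) :=
  {x : (Fin 3 → V) →₀ R |
    (∃ v0 v1 : V, E v0 v1 ∧ E v1 v0 ∧ x = Finsupp.single ![v0, v1, v0] 1) ∨
    (∃ v0 v1 v2 : V, E v0 v1 ∧ E v1 v2 ∧ E v0 v2 ∧
      x = Finsupp.single ![v0, v1, v2] 1) ∨
    (∃ v0 v1 v1' v2 : V, E v0 v1 ∧ E v0 v1' ∧ E v1 v2 ∧ E v1' v2 ∧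
      v0 ≠ v2 ∧ v1 ≠ v1' ∧ ¬ E v0 v2 ∧
      x = Finsupp.single ![v0, v1, v2] 1 - Finsupp.single ![v0, v1', v2] 1)}

lemma regLow2 (q : Fin 2 → V) : IsRegularLow V 2 q ↔ q 0 ≠ q 1 := by
  constructor
  · intro h; exact h ⟨0, by omega⟩
  · intro h j; fin_cases j; exact h

lemma allLow2 (E : V → V → Prop) (q : Fin 2 → V) : IsAllowedLow V E 2 q ↔ E (q 0) (q 1) := by
  constructor
  · intro h; exact h ⟨0, by omega⟩
  · intro h j; fin_cases j; exact h

lemma all2 (E : V → V → Prop) (p : Fin 3 → V) :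
    IsAllowed V E 2 p ↔ E (p 0) (p 1) ∧ E (p 1) (p 2) := by
  constructor
  · intro h; exact ⟨h 0, h 1⟩
  · rintro ⟨h1, h2⟩ i; fin_cases i <;> assumption

lemma face0 (p : Fin (2+1) → V) : p ∘ Fin.succAbove 0 = ![p 1, p 2] := by
  funext j; fin_cases j <;> rfl
lemma face1 (p : Fin (2+1) → V) : p ∘ Fin.succAbove 1 = ![p 0, p 2] := by
  funext j; fin_cases j <;> rfl
lemma face2 (p : Fin (2+1) → V) : p ∘ Fin.succAbove 2 = ![p 0, p 1] := by
  funext j; fin_cases j <;> rfl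

lemma eta3 (p : Fin 3 → V) : p = ![p 0, p 1, p 2] := by
  funext j; fin_cases j <;> rfl

lemma vec2_eq (u v a c : V) : ![u, v] = ![a, c] ↔ u = a ∧ v = c := by
  constructor
  · intro h; exact ⟨congrFun h 0, congrFun h 1⟩
  · rintro ⟨rfl, rfl⟩; rfl

open Classical in
lemma pB2_single (p : Fin 3 → V) (r : R) (h01 : p 0 ≠ p 1) (h12 : p 1 ≠ p 2) :
    pathBoundary V R 2 (Finsupp.single p r)
      = Finsupp.single ![p 1, p 2] r + Finsupp.single ![p 0, p 1] r
        - (if p 0 = p 2 then 0 else Finsupp.single ![p 0, p 2] r) := by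
  rw [pathBoundary, LinearMap.sum_apply, Fin.sum_univ_three]
  simp only [LinearMap.smul_apply, Finsupp.lsum_single, face0, face1, face2]
  by_cases h02 : p 0 = p 2
  · rw [if_pos ((regLow2 _).2 (by simpa using h12)),
      if_neg (fun h => (by simpa using (regLow2 _).1 h : p 0 ≠ p 2) h02),
      if_pos ((regLow2 _).2 (by simpa using h01)), if_pos h02]
    simp [pow_succ]
  · rw [if_pos ((regLow2 _).2 (by simpa using h12)),
      if_pos ((regLow2 _).2 (by simpa using h02)),
      if_pos ((regLow2 _).2 (by simpa using h01)), if_neg h02]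
    simp [pow_succ]; abel

lemma single_mem_Omega_aux {q : Fin 2 → V} (h : E (q 0) (q 1)) (r : R) :
    Finsupp.single q r ∈ Finsupp.supported R R {q | IsAllowedLow V E 2 q} :=
  Finsupp.single_mem_supported R r ((allLow2 E q).2 h)

/-- Every generator lies in `Ω₂`. -/
lemma genSet_subset_Omega (hirr : ∀ u v, E u v → u ≠ v) :
    genSet V E R ⊆ (Omega V E R 2 : Set ((Fin 3 → V) →₀ R)) := by
  rintro x (⟨v0, v1, e1, e2, rfl⟩ | ⟨v0, v1, v2, e1, e2, e3, rfl⟩ |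
    ⟨v0, v1, v1', v2, e1, e1', e2, e2', h02, h11, hne, rfl⟩) <;>
    rw [SetLike.mem_coe, Omega, Submodule.mem_inf, Submodule.mem_comap]
  · constructor
    · exact Finsupp.single_mem_supported R 1 ((all2 E _).2 (by simpa using ⟨e1, e2⟩))
    · rw [pB2_single _ _ (by simpa using hirr _ _ e1) (by simpa using hirr _ _ e2)]
      simp only [Matrix.cons_val_zero, Matrix.cons_val_one, Matrix.head_cons,
        Matrix.cons_val_two, Matrix.tail_cons]
      rw [if_pos trivial, sub_zero]
      exact add_mem (single_mem_Omega_aux (by simpa using e2) 1)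
        (single_mem_Omega_aux (by simpa using e1) 1)
  · constructor
    · exact Finsupp.single_mem_supported R 1 ((all2 E _).2 (by simpa using ⟨e1, e2⟩))
    · rw [pB2_single _ _ (by simpa using hirr _ _ e1) (by simpa using hirr _ _ e2)]
      simp only [Matrix.cons_val_zero, Matrix.cons_val_one, Matrix.head_cons,
        Matrix.cons_val_two, Matrix.tail_cons]
      erw [if_neg (show ¬ v0 = v2 from hirr _ _ e3)]
      exact sub_mem (add_mem (single_mem_Omega_aux (by simpa using e2) 1)
        (single_mem_Omega_aux (by simpa using e1) 1))
        (single_mem_Omega_aux (by simpa using e3) 1)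
  · constructor
    · exact sub_mem
        (Finsupp.single_mem_supported R 1 ((all2 E _).2 (by simpa using ⟨e1, e2⟩)))
        (Finsupp.single_mem_supported R 1 ((all2 E _).2 (by simpa using ⟨e1', e2'⟩)))
    · rw [map_sub,
        pB2_single _ _ (by simpa using hirr _ _ e1) (by simpa using hirr _ _ e2),
        pB2_single _ _ (by simpa using hirr _ _ e1') (by simpa using hirr _ _ e2')]
      simp only [Matrix.cons_val_zero, Matrix.cons_val_one, Matrix.head_cons,
        Matrix.cons_val_two, Matrix.tail_cons]
      erw [if_neg (show ¬ v0 = v2 from h02)]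
      have heq : ∀ A B C A' B' : (Fin 2 → V) →₀ R,
          (A + B - C) - (A' + B' - C) = (A + B) - (A' + B') := by intros; abel
      rw [heq]
      exact sub_mem
        (add_mem (single_mem_Omega_aux (by simpa using e2) 1)
          (single_mem_Omega_aux (by simpa using e1) 1))
        (add_mem (single_mem_Omega_aux (by simpa using e2') 1)
          (single_mem_Omega_aux (by simpa using e1') 1))

open Classical in
/-- The key cancellation: for `x ∈ Ω₂` and a vertex pair `(a,c)` with `a ≠ c` and no edge
`a → c`, the coefficients of `x` on paths `a → b → c` sum to zero. -/
lemma cancel_sum (hirr : ∀ u v, E u v → u ≠ v) (x : (Fin 3 → V) →₀ R)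
    (hx : x ∈ Omega V E R 2)
    (hQ : ∀ p ∈ x.support, p 0 ≠ p 2) (a c : V) (hac : ¬ E a c) :
    (∑ p ∈ x.support, if p 0 = a ∧ p 2 = c then x p else 0) = 0 := by
  obtain ⟨hsup, hbd⟩ := (Submodule.mem_inf).1 hx
  rw [Submodule.mem_comap, Finsupp.mem_supported] at hbd
  rw [Finsupp.mem_supported] at hsup
  have hq0 : (pathBoundary V R 2 x) ![a, c] = 0 := by
    by_contra h
    have := hbd (Finsupp.mem_support_iff.2 h)
    rw [Set.mem_setOf_eq, allLow2] at this
    simp only [Matrix.cons_val_zero, Matrix.cons_val_one, Matrix.head_cons] at this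
    exact hac this
  have hev : (pathBoundary V R 2 x) ![a, c]
      = - ∑ p ∈ x.support, (if p 0 = a ∧ p 2 = c then x p else 0) := by
    conv_lhs => rw [← Finsupp.sum_single x, map_finsuppSum, Finsupp.sum_apply]
    rw [Finsupp.sum, ← Finset.sum_neg_distrib]
    refine Finset.sum_congr rfl fun p hp => ?_
    have hall : IsAllowed V E 2 p := hsup hp
    obtain ⟨ha1, ha2⟩ := (all2 E p).1 hall
    rw [pB2_single p (x p) (hirr _ _ ha1) (hirr _ _ ha2), if_neg (hQ p hp)]
    rw [Finsupp.sub_apply, Finsupp.add_apply]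
    rw [Finsupp.single_apply, Finsupp.single_apply, Finsupp.single_apply]
    rw [if_neg (fun h => hac (by
      obtain ⟨h1, h2⟩ := (vec2_eq _ _ _ _).1 h; rw [← h1, ← h2]; exact ha2))]
    rw [if_neg (fun h => hac (by
      obtain ⟨h1, h2⟩ := (vec2_eq _ _ _ _).1 h; rw [← h1, ← h2]; exact ha1))]
    rw [if_congr (vec2_eq (p 0) (p 2) a c) rfl rfl]
    ring
  rw [hev, neg_eq_zero] at hq0
  exact hq0
  

open Classical in
lemma Q_mem_span (hirr : ∀ u v, E u v → u ≠ v) :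
    ∀ (n : ℕ) (x : (Fin 3 → V) →₀ R), x.support.card ≤ n →
      x ∈ Omega V E R 2 →
      (∀ p ∈ x.support, p 0 ≠ p 2 ∧ ¬ E (p 0) (p 2)) →
      x ∈ Submodule.span R (genSet V E R) := by
  intro n
  induction n with
  | zero =>
    intro x hcard _ _
    have : x.support = ∅ := Finset.card_eq_zero.1 (Nat.le_zero.1 hcard)
    rw [Finsupp.support_eq_empty.1 this]
    exact Submodule.zero_mem _
  | succ n IH =>
    intro x hcard hx hQ
    rcases eq_or_ne x 0 with rfl | hx0
    · exact Submodule.zero_mem _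
    obtain ⟨p₀, hp₀⟩ := Finsupp.support_nonempty_iff.2 hx0
    have hac : ¬ E (p₀ 0) (p₀ 2) := (hQ p₀ hp₀).2
    have hsum := cancel_sum hirr x hx (fun p hp => (hQ p hp).1) (p₀ 0) (p₀ 2) hac
    have hex : ∃ p₁ ∈ x.support, p₁ ≠ p₀ ∧ p₁ 0 = p₀ 0 ∧ p₁ 2 = p₀ 2 := by
      by_contra hno
      push_neg at hno
      rw [Finset.sum_eq_single p₀ (fun p hp hne => if_neg (fun hcon =>
        (hno p hp hne hcon.1) hcon.2)) (fun h => absurd hp₀ h)] at hsum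
      rw [if_pos ⟨rfl, rfl⟩] at hsum
      exact Finsupp.mem_support_iff.1 hp₀ hsum
    obtain ⟨p₁, hp₁, hne, h10, h12⟩ := hex
    have hb : p₀ 1 ≠ p₁ 1 := by
      intro h
      apply hne
      funext j
      fin_cases j
      · exact h10
      · exact h.symm
      · exact h12
    obtain ⟨hsup', _⟩ := Submodule.mem_inf.1 hx
    have hsup := (Finsupp.mem_supported R x).1 hsup'
    obtain ⟨e01, e12⟩ := (all2 E p₀).1 (hsup hp₀)
    obtain ⟨e01', e12'⟩ := (all2 E p₁).1 (hsup hp₁)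
    set g : (Fin 3 → V) →₀ R := Finsupp.single p₀ 1 - Finsupp.single p₁ 1 with hg
    have hgmem : g ∈ genSet V E R := by
      right; right
      refine ⟨p₀ 0, p₀ 1, p₁ 1, p₀ 2, e01, by rwa [h10] at e01', e12,
        by rwa [h12] at e12', (hQ p₀ hp₀).1, hb, hac, ?_⟩
      rw [hg]
      congr 1
      · congr 1
        conv_lhs => rw [eta3 p₀]
      · congr 1
        conv_lhs => rw [eta3 p₁, h10, h12]
    have hgO : g ∈ Omega V E R 2 := genSet_subset_Omega hirr hgmem
    have hsub : (x - x p₀ • g).support ⊆ x.support.erase p₀ := by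
      intro p hp
      rw [Finsupp.mem_support_iff] at hp
      have hval : (x - x p₀ • g) p
          = x p - x p₀ * ((if p₀ = p then (1:R) else 0) - (if p₁ = p then 1 else 0)) := by
        rw [Finsupp.sub_apply, Finsupp.smul_apply, hg, Finsupp.sub_apply,
          Finsupp.single_apply, Finsupp.single_apply, smul_eq_mul]
      rcases eq_or_ne p p₀ with rfl | hpp
      · exfalso
        apply hp
        rw [hval, if_pos rfl, if_neg hne]
        ring
      · rw [Finset.mem_erase]
        refine ⟨hpp, ?_⟩
        rw [Finsupp.mem_support_iff]
        rcases eq_or_ne p p₁ with rfl | hpp1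
        · exact Finsupp.mem_support_iff.1 hp₁
        · intro h0
          apply hp
          rw [hval, if_neg (fun h => hpp h.symm), if_neg (fun h => hpp1 h.symm), h0]
          ring
    have hy : x - x p₀ • g ∈ Submodule.span R (genSet V E R) := by
      apply IH
      · calc (x - x p₀ • g).support.card ≤ (x.support.erase p₀).card :=
            Finset.card_le_card hsub
          _ = x.support.card - 1 := Finset.card_erase_of_mem hp₀
          _ ≤ n := by
              have := Finset.card_pos.2 ⟨p₀, hp₀⟩
              omega
      · exact sub_mem hx (Submodule.smul_mem _ _ hgO)
      · intro p hp
        exact hQ p (Finset.mem_of_mem_erase (hsub hp))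
    have hx' := Submodule.add_mem _ hy
      (Submodule.smul_mem _ (x p₀) (Submodule.subset_span hgmem))
    simpa using hx'

end Aux

/-- The double edges, directed triangles, and directed squares generate
`Ω_2(G;R)` as an `R`-module, for any digraph `G` and any commutative ring `R` with unit. -/
theorem Omega_two_eq_span (V : Type) (E : V → V → Prop)
    (hirr : ∀ u v, E u v → u ≠ v) (R : Type) [CommRing R] :
    Omega V E R 2 = Submodule.span R
      {x : (Fin 3 → V) →₀ R |
        (∃ v0 v1 : V, E v0 v1 ∧ E v1 v0 ∧ x = Finsupp.single ![v0, v1, v0] 1) ∨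
        (∃ v0 v1 v2 : V, E v0 v1 ∧ E v1 v2 ∧ E v0 v2 ∧
          x = Finsupp.single ![v0, v1, v2] 1) ∨
        (∃ v0 v1 v1' v2 : V, E v0 v1 ∧ E v0 v1' ∧ E v1 v2 ∧ E v1' v2 ∧
          v0 ≠ v2 ∧ v1 ≠ v1' ∧ ¬ E v0 v2 ∧
          x = Finsupp.single ![v0, v1, v2] 1 - Finsupp.single ![v0, v1', v2] 1)} := by
  classical
  show Omega V E R 2 = Submodule.span R (genSet V E R)
  have hspan_le : Submodule.span R (genSet V E R) ≤ Omega V E R 2 :=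
    Submodule.span_le.2 (genSet_subset_Omega hirr)
  refine le_antisymm ?_ hspan_le
  intro x hx
  obtain ⟨hsup', hbd'⟩ := Submodule.mem_inf.1 hx
  have hsup := (Finsupp.mem_supported R x).1 hsup'
  set xD := Finsupp.filter (fun p : Fin 3 → V => p 0 = p 2) x with hxD
  set xT := Finsupp.filter (fun p : Fin 3 → V => p 0 ≠ p 2 ∧ E (p 0) (p 2)) x with hxT
  set xQ := Finsupp.filter (fun p : Fin 3 → V => p 0 ≠ p 2 ∧ ¬ E (p 0) (p 2)) x with hxQ
  have hdecomp : x = xD + xT + xQ := by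
    ext p
    rw [Finsupp.add_apply, Finsupp.add_apply, hxD, hxT, hxQ,
      Finsupp.filter_apply, Finsupp.filter_apply, Finsupp.filter_apply]
    by_cases h1 : p 0 = p 2 <;> by_cases h2 : E (p 0) (p 2) <;> simp [h1, h2]
  have hD : xD ∈ Submodule.span R (genSet V E R) := by
    have h1 : xD ∈ Finsupp.supported R R {p : Fin 3 → V | IsAllowed V E 2 p ∧ p 0 = p 2} := by
      rw [Finsupp.mem_supported]
      intro p hp
      rw [Finset.mem_coe, hxD, Finsupp.support_filter, Finset.mem_filter] at hp
      exact ⟨hsup hp.1, hp.2⟩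
    rw [Finsupp.supported_eq_span_single] at h1
    refine Submodule.span_mono ?_ h1
    rintro y ⟨p, ⟨hall, h02⟩, rfl⟩
    obtain ⟨e1, e2⟩ := (all2 E p).1 hall
    left
    exact ⟨p 0, p 1, e1, by rwa [← h02] at e2, by conv_lhs => rw [eta3 p, ← h02]⟩
  have hT : xT ∈ Submodule.span R (genSet V E R) := by
    have h1 : xT ∈ Finsupp.supported R R
        {p : Fin 3 → V | IsAllowed V E 2 p ∧ E (p 0) (p 2)} := by
      rw [Finsupp.mem_supported]
      intro p hp
      rw [Finset.mem_coe, hxT, Finsupp.support_filter, Finset.mem_filter] at hp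
      exact ⟨hsup hp.1, hp.2.2⟩
    rw [Finsupp.supported_eq_span_single] at h1
    refine Submodule.span_mono ?_ h1
    rintro y ⟨p, ⟨hall, h02⟩, rfl⟩
    obtain ⟨e1, e2⟩ := (all2 E p).1 hall
    right; left
    exact ⟨p 0, p 1, p 2, e1, e2, h02, by conv_lhs => rw [eta3 p]⟩
  have hQ : xQ ∈ Submodule.span R (genSet V E R) := by
    apply Q_mem_span hirr xQ.support.card xQ le_rfl
    · have hxQ_eq : xQ = x - xD - xT := by rw [hdecomp]; abel
      rw [hxQ_eq]
      exact sub_mem (sub_mem hx (hspan_le hD)) (hspan_le hT)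
    · intro p hp
      rw [hxQ, Finsupp.support_filter, Finset.mem_filter] at hp
      exact hp.2
  rw [hdecomp]
  exact add_mem (add_mem hD hT) hQ
end

section
/- Let G be a digraph and K a field of characteristic 0. The map μ_n: Ω_n(G;ℤ) ⊗_ℤ K → Ω_n(G;K), x ⊗ k ↦ k·x, is an isomorphism of K-vector spaces, and it commutes with the head and tail face maps δ^h_n and δ^t_n. -/
open Finsupp

/-- The full head face map `δ^h_d` (truncation of the last vertex), the sum over all
vertices `u` of the head-restriction maps `δ^h_{d,u}`; it coincides with `(-1)^d ∂^P_{d,d}`. -/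
noncomputable def headFace (V : Type) (R : Type) [CommRing R] (d : ℕ) :
    ((Fin (d+1) → V) →₀ R) →ₗ[R] ((Fin d → V) →₀ R) :=
  Finsupp.lmapDomain R R (fun p : Fin (d+1) → V => fun j : Fin d => p j.castSucc)

/-- The full tail face map `δ^t_d` (truncation of the first vertex), the sum over all
vertices `u` of the tail-restriction maps `δ^t_{d,u}`; it coincides with `∂^P_{d,0}`. -/
noncomputable def tailFace (V : Type) (R : Type) [CommRing R] (d : ℕ) :
    ((Fin (d+1) → V) →₀ R) →ₗ[R] ((Fin d → V) →₀ R) :=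
  Finsupp.lmapDomain R R (fun p : Fin (d+1) → V => fun j : Fin d => p j.succ)

/-! ### Auxiliary machinery for Statement 11 -/

section Aux11
open TensorProduct

set_option linter.unusedSectionVars false

variable (K : Type) [Field K] [CharZero K] (α : Type)

/-- The coefficient-cast map `(α →₀ ℤ) → (α →₀ K)` as a `ℤ`-linear map. -/
noncomputable def iotaLM : (α →₀ ℤ) →ₗ[ℤ] (α →₀ K) :=
  Finsupp.mapRange.linearMap ((Int.castRingHom K).toAddMonoidHom.toIntLinearMap)

lemma iotaLM_apply (x : α →₀ ℤ) (h : ((0:ℤ):K) = 0) :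
    iotaLM K α x = Finsupp.mapRange (fun r : ℤ => (r : K)) h x := rfl

lemma iotaLM_single (a : α) (r : ℤ) :
    iotaLM K α (Finsupp.single a r) = Finsupp.single a (r : K) := by
  simp [iotaLM]

/-- Base change of free modules: `K ⊗[ℤ] (α →₀ ℤ) ≃ₗ[K] (α →₀ K)`. -/
noncomputable def eEquiv : (TensorProduct ℤ K (α →₀ ℤ)) ≃ₗ[K] (α →₀ K) :=
  LinearEquiv.ofLinear
    (TensorProduct.AlgebraTensorModule.lift (LinearMap.toSpanSingleton K _ (iotaLM K α)))
    (Finsupp.lsum K fun a => LinearMap.toSpanSingleton K _ ((1:K) ⊗ₜ[ℤ] Finsupp.single a 1))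
    (by
      apply Finsupp.lhom_ext
      intro a b
      simp [Finsupp.lsum_single, LinearMap.toSpanSingleton_apply, smul_tmul', iotaLM_single,
        Finsupp.smul_single])
    (by
      apply LinearMap.ext
      intro t
      induction t with
      | zero => simp
      | add x y hx hy => simp [map_add, hx, hy]
      | tmul k x =>
        induction x using Finsupp.induction_linear with
        | zero => simp
        | add f g hf hg => simp [tmul_add, map_add, hf, hg]
        | single a z =>
          simp only [LinearMap.coe_comp, Function.comp_apply, LinearMap.id_coe, id_eq]
          rw [TensorProduct.AlgebraTensorModule.lift_tmul]
          simp only [LinearMap.toSpanSingleton_apply, LinearMap.smul_apply, iotaLM_single,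
            Finsupp.smul_single, smul_eq_mul, mul_one]
          rw [Finsupp.lsum_single, LinearMap.toSpanSingleton_apply]
          rw [mul_comm, mul_smul, smul_tmul', smul_eq_mul, mul_one,
            Int.cast_smul_eq_zsmul, ← TensorProduct.tmul_smul]
          simp)

lemma eEquiv_tmul (k : K) (x : α →₀ ℤ) : eEquiv K α (k ⊗ₜ[ℤ] x) = k • iotaLM K α x := by
  simp [eEquiv, TensorProduct.AlgebraTensorModule.lift_tmul, LinearMap.toSpanSingleton_apply]

/-- Restriction to a set of coordinates, as a linear map. -/
noncomputable def filterLM (R : Type) [CommRing R] (s : Set α) :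
    (α →₀ R) →ₗ[R] (α →₀ R) := by
  classical exact
  { toFun := fun x => x.filter (· ∈ s)
    map_add' := fun x y => Finsupp.filter_add
    map_smul' := fun c x => by
      ext a
      simp only [Finsupp.filter_apply, Finsupp.smul_apply, RingHom.id_apply]
      split <;> simp }

lemma filterLM_apply (R : Type) [CommRing R] (s : Set α) [DecidablePred (· ∈ s)]
    (x : α →₀ R) (a : α) : filterLM α R s x a = if a ∈ s then x a else 0 := by
  rw [filterLM]
  simp only [LinearMap.coe_mk, AddHom.coe_mk]
  rw [Finsupp.filter_apply]
  congr

lemma mem_supported_iff_filterLM (R : Type) [CommRing R] (s : Set α) (x : α →₀ R) :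
    x ∈ Finsupp.supported R R s ↔ filterLM α R sᶜ x = 0 := by
  classical
  rw [Finsupp.mem_supported']
  constructor
  · intro h; ext a
    rw [filterLM_apply]
    simp only [Set.mem_compl_iff, Finsupp.coe_zero, Pi.zero_apply]
    split
    · exact h a ‹_›
    · rfl
  · intro h a ha
    have := congrArg (fun y => y a) h
    simpa [filterLM_apply, ha] using this

lemma filterLM_iota (s : Set α) (x : α →₀ ℤ) :
    filterLM α K s (iotaLM K α x) = iotaLM K α (filterLM α ℤ s x) := by
  classical
  ext a
  rw [filterLM_apply, iotaLM_apply K α _ (by simp), iotaLM_apply K α _ (by simp),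
    Finsupp.mapRange_apply, Finsupp.mapRange_apply, filterLM_apply]
  split <;> simp

end Aux11

lemma pathBoundary_iota (V : Type) (K : Type) [Field K] [CharZero K] (d : ℕ)
    (x : (Fin (d+1) → V) →₀ ℤ) :
    pathBoundary V K d (iotaLM K _ x) = iotaLM K _ (pathBoundary V ℤ d x) := by
  induction x using Finsupp.induction_linear with
  | zero => simp
  | add f g hf hg => simp [map_add, hf, hg]
  | single p r =>
    rw [iotaLM_single, pathBoundary, pathBoundary]
    rw [LinearMap.sum_apply, LinearMap.sum_apply, map_sum]
    refine Finset.sum_congr rfl fun i _ => ?_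
    rw [LinearMap.smul_apply, LinearMap.smul_apply, map_smul,
      Finsupp.lsum_single, Finsupp.lsum_single]
    rw [← Int.cast_smul_eq_zsmul K ((-1:ℤ)^(i:ℕ)), Int.cast_pow, Int.cast_neg, Int.cast_one]
    congr 1
    split
    · rw [Finsupp.lsingle_apply, Finsupp.lsingle_apply, iotaLM_single]
    · simp

/-- The linear map whose kernel is `Omega V E R n`. -/
noncomputable def gMap (V : Type) (E : V → V → Prop) (R : Type) [CommRing R] (n : ℕ) :
    ((Fin (n+1) → V) →₀ R) →ₗ[R]
      (((Fin (n+1) → V) →₀ R) × ((Fin n → V) →₀ R)) :=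
  LinearMap.prod (filterLM _ R {p | IsAllowed V E n p}ᶜ)
    ((filterLM _ R {q | IsAllowedLow V E n q}ᶜ).comp (pathBoundary V R n))

lemma mem_Omega_iff (V : Type) (E : V → V → Prop) (R : Type) [CommRing R] (n : ℕ)
    (x : (Fin (n+1) → V) →₀ R) :
    x ∈ Omega V E R n ↔ gMap V E R n x = 0 := by
  rw [Omega, Submodule.mem_inf, Submodule.mem_comap,
    mem_supported_iff_filterLM, mem_supported_iff_filterLM]
  simp [gMap, Prod.ext_iff]

lemma gMap_iota (V : Type) (E : V → V → Prop) (K : Type) [Field K] [CharZero K] (n : ℕ)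
    (x : (Fin (n+1) → V) →₀ ℤ) :
    gMap V E K n (iotaLM K _ x) =
      (iotaLM K _ (gMap V E ℤ n x).1, iotaLM K _ (gMap V E ℤ n x).2) := by
  simp [gMap, filterLM_iota, pathBoundary_iota]
set_option maxHeartbeats 1000000 in
set_option synthInstance.maxHeartbeats 1000000 in
/-- For a field `K` of characteristic `0`, the map
`μ_n : Ω_n(G;ℤ) ⊗_ℤ K → Ω_n(G;K)`, `x ⊗ k ↦ k·x`, is an isomorphism of `K`-vector
spaces, and the coefficient extension commutes with the head and tail face maps `δ^h`
and `δ^t`. -/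
theorem Omega_int_tensor_equiv (V : Type) (E : V → V → Prop)
    (hirr : ∀ u v, E u v → u ≠ v) (K : Type) [Field K] [CharZero K] (n : ℕ) :
    (∃ μ : TensorProduct ℤ K (Omega V E ℤ n) ≃ₗ[K] Omega V E K n,
      ∀ (k : K) (x : Omega V E ℤ n),
        ((μ (k ⊗ₜ[ℤ] x) : Omega V E K n) : (Fin (n+1) → V) →₀ K) =
          k • Finsupp.mapRange (fun r : ℤ => (r : K)) (by simp)
                ((x : Omega V E ℤ n) : (Fin (n+1) → V) →₀ ℤ)) ∧
    (∀ x : (Fin (n+2) → V) →₀ ℤ,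
      headFace V K (n+1) (Finsupp.mapRange (fun r : ℤ => (r : K)) (by simp) x) =
        Finsupp.mapRange (fun r : ℤ => (r : K)) (by simp) (headFace V ℤ (n+1) x)) ∧
    (∀ x : (Fin (n+2) → V) →₀ ℤ,
      tailFace V K (n+1) (Finsupp.mapRange (fun r : ℤ => (r : K)) (by simp) x) =
        Finsupp.mapRange (fun r : ℤ => (r : K)) (by simp) (tailFace V ℤ (n+1) x)) := by
  classical
  haveI : Module.Flat ℤ ℚ := IsLocalization.flat ℚ (nonZeroDivisors ℤ)
  haveI : Module.Flat ℤ K := Module.Flat.trans ℤ ℚ K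
  refine ⟨?_, ?_, ?_⟩
  · -- the isomorphism
    set Ω0 : Submodule ℤ ((Fin (n+1) → V) →₀ ℤ) := Omega V E ℤ n with hΩ0
    set g0 := gMap V E ℤ n with hg0
    set gK := gMap V E K n with hgK
    set e := eEquiv K (Fin (n+1) → V) with he
    set eT := (TensorProduct.prodRight ℤ ℤ K ((Fin (n+1) → V) →₀ ℤ) ((Fin n → V) →₀ ℤ)).trans
      (((eEquiv K (Fin (n+1) → V)).restrictScalars ℤ).prodCongr
        ((eEquiv K (Fin n → V)).restrictScalars ℤ)) with heT
    have hsq : ∀ y : TensorProduct ℤ K ((Fin (n+1) → V) →₀ ℤ),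
        gK (e y) = eT (LinearMap.lTensor K g0 y) := by
      intro y
      induction y with
      | zero => simp
      | add a b ha hb => simp only [map_add, ha, hb]
      | tmul k x =>
        rw [LinearMap.lTensor_tmul]
        have hx : g0 x = ((g0 x).1, (g0 x).2) := rfl
        rw [hx, heT]
        simp only [LinearEquiv.trans_apply, TensorProduct.prodRight_tmul,
          LinearEquiv.prodCongr_apply, LinearEquiv.restrictScalars_apply]
        change _ = (eEquiv K _ (k ⊗ₜ[ℤ] (g0 x).1), eEquiv K _ (k ⊗ₜ[ℤ] (g0 x).2))
        rw [he, eEquiv_tmul, map_smul, eEquiv_tmul, eEquiv_tmul, hgK, gMap_iota]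
        rw [Prod.smul_mk]
    have hexact0 : Function.Exact Ω0.subtype g0 := by
      rw [LinearMap.exact_iff, Submodule.range_subtype]
      ext x
      rw [LinearMap.mem_ker, hΩ0]
      exact (mem_Omega_iff V E ℤ n x).symm
    have hex := Module.Flat.lTensor_exact K hexact0
    have hinj : Function.Injective (LinearMap.lTensor K Ω0.subtype) :=
      Module.Flat.lTensor_preserves_injective_linearMap _ (Submodule.injective_subtype _)
    set F : TensorProduct ℤ K Ω0 →ₗ[K] ((Fin (n+1) → V) →₀ K) :=
      e.toLinearMap ∘ₗ (Ω0.subtype.baseChange K) with hFdef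
    have hF : ∀ t, F t = e (LinearMap.lTensor K Ω0.subtype t) := by
      intro t
      rw [hFdef]
      simp only [LinearMap.coe_comp, Function.comp_apply, LinearEquiv.coe_coe]
      rw [congrFun (LinearMap.baseChange_eq_ltensor Ω0.subtype (A := K)) t]
    have hzc : g0 ∘ₗ Ω0.subtype = 0 := by
      apply LinearMap.ext
      intro x
      simpa using (mem_Omega_iff V E ℤ n x).mp x.2
    have hFmem : ∀ t, F t ∈ Omega V E K n := by
      intro t
      rw [mem_Omega_iff, hF, hsq, ← LinearMap.lTensor_comp_apply, hzc]
      simp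
    set F' : TensorProduct ℤ K Ω0 →ₗ[K] Omega V E K n :=
      F.codRestrict (Omega V E K n) hFmem with hF'def
    have hinj' : Function.Injective F' := by
      intro a b hab
      have h1 : F a = F b := congrArg Subtype.val hab
      rw [hF, hF] at h1
      exact hinj (e.injective h1)
    have hsurj' : Function.Surjective F' := by
      rintro ⟨y, hy⟩
      rw [mem_Omega_iff] at hy
      set t0 := e.symm y with ht0
      have h2 : LinearMap.lTensor K g0 t0 = 0 := by
        apply eT.injective
        rw [← hsq, ht0, e.apply_symm_apply]
        simp [hgK, hy]
      obtain ⟨s, hs⟩ := (hex t0).mp h2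
      refine ⟨s, ?_⟩
      apply Subtype.ext
      show F s = y
      rw [hF, hs, ht0, e.apply_symm_apply]
    refine ⟨LinearEquiv.ofBijective F' ⟨hinj', hsurj'⟩, ?_⟩
    intro k x
    show (F' (k ⊗ₜ[ℤ] x) : (Fin (n+1) → V) →₀ K) = _
    have : (F' (k ⊗ₜ[ℤ] x) : (Fin (n+1) → V) →₀ K) = F (k ⊗ₜ[ℤ] x) := rfl
    rw [this, hFdef]
    simp only [LinearMap.coe_comp, Function.comp_apply, LinearEquiv.coe_coe]
    rw [LinearMap.baseChange_tmul, he, eEquiv_tmul, iotaLM_apply K _ _ (by simp)]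
    rfl
  · intro x
    rw [headFace, headFace, Finsupp.lmapDomain_apply, Finsupp.lmapDomain_apply,
      Finsupp.mapDomain_mapRange _ _ _ _ (by push_cast; intro a b; push_cast; ring)]
  · intro x
    rw [tailFace, tailFace, Finsupp.lmapDomain_apply, Finsupp.lmapDomain_apply,
      Finsupp.mapDomain_mapRange _ _ _ _ (by push_cast; intro a b; push_cast; ring)]
end

section
/- For the trapezohedron digraph 𝕋_t of order t ≥ 2, the R-module Ω_3(𝕋_t;R) is free of rank 1, generated by the element Σ_{i=1}^t (e_{T,u_i,v_i,H} − e_{T,u_i,v_{i+1},H}) (indices mod t), and the path homology H^P_n(𝕋_t;R) vanishes for all n ≥ 1. -/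
open Finsupp

/-- The vertices of the trapezohedron digraph `𝕋_t`: the apex `T`, the vertices
`u_1, …, u_t`, the vertices `v_1, …, v_t` (indexed by `ZMod t`), and the apex `H`. -/
inductive TrapV (t : ℕ) : Type
  | top : TrapV t
  | mid : ZMod t → TrapV t
  | upp : ZMod t → TrapV t
  | head : TrapV t

/-- The edges of the trapezohedron `𝕋_t`: `T → u_i`, `u_i → v_i`, `u_i → v_{i+1}`,
`v_i → H` (indices modulo `t`). -/
def TrapE (t : ℕ) : TrapV t → TrapV t → Prop
  | .top, .mid _ => True
  | .mid i, .upp j => j = i ∨ j = i + 1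
  | .upp _, .head => True
  | _, _ => False

/-- The trapezohedron element `Σ_{i=1}^t (e_{T,u_i,v_i,H} − e_{T,u_i,v_{i+1},H})`. -/
noncomputable def trapGen (t : ℕ) (R : Type) [CommRing R] :
    (Fin 4 → TrapV t) →₀ R :=
  ∑ i : Fin t,
    (Finsupp.single
        ![TrapV.top, TrapV.mid (i.val : ZMod t), TrapV.upp (i.val : ZMod t), TrapV.head] 1 -
     Finsupp.single
        ![TrapV.top, TrapV.mid (i.val : ZMod t), TrapV.upp ((i.val : ZMod t) + 1),
          TrapV.head] 1)


open Finsupp Classical in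
lemma pathBoundary_single (V : Type) (R : Type) [CommRing R] (d : ℕ) (p : Fin (d+1) → V) (r : R) :
    pathBoundary V R d (Finsupp.single p r) =
      ∑ i : Fin (d+1), ((-1 : R)^(i : ℕ)) •
        (if IsRegularLow V d (p ∘ i.succAbove) then Finsupp.single (p ∘ i.succAbove) r else 0) := by
  rw [pathBoundary, LinearMap.sum_apply]
  refine Finset.sum_congr rfl fun i _ => ?_
  rw [LinearMap.smul_apply]
  congr 1
  rw [Finsupp.lsum_single]
  split_ifs <;> simp
open Finsupp

lemma isReg3 {V : Type} {b c e : V} (h1 : b ≠ c) (h2 : c ≠ e) : IsRegularLow V 3 ![b,c,e] := by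
  intro j
  fin_cases j
  · exact h1
  · exact h2

lemma isReg2 {V : Type} {b c : V} (h1 : b ≠ c) : IsRegularLow V 2 ![b,c] := by
  intro j; fin_cases j; exact h1

lemma isReg1 {V : Type} {b : V} : IsRegularLow V 1 ![b] := by
  intro j; exact absurd j.isLt (by omega)

lemma bdry3 {V : Type} (R : Type) [CommRing R] (a b c e : V) (r : R)
    (hab : a ≠ b) (hbc : b ≠ c) (hce : c ≠ e) (hac : a ≠ c) (hbe : b ≠ e) :
    pathBoundary V R 3 (Finsupp.single ![a,b,c,e] r) =
      single ![b,c,e] r - single ![a,c,e] r + single ![a,b,e] r - single ![a,b,c] r := by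
  rw [pathBoundary_single, Fin.sum_univ_four]
  have h0 : (![a,b,c,e] ∘ (0 : Fin 4).succAbove) = ![b,c,e] := by funext j; fin_cases j <;> rfl
  have h1 : (![a,b,c,e] ∘ (1 : Fin 4).succAbove) = ![a,c,e] := by funext j; fin_cases j <;> rfl
  have h2 : (![a,b,c,e] ∘ (2 : Fin 4).succAbove) = ![a,b,e] := by funext j; fin_cases j <;> rfl
  have h3 : (![a,b,c,e] ∘ (3 : Fin 4).succAbove) = ![a,b,c] := by funext j; fin_cases j <;> rfl
  rw [h0, h1, h2, h3, if_pos (isReg3 hbc hce), if_pos (isReg3 hac hce), if_pos (isReg3 hab hbe),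
    if_pos (isReg3 hab hbc)]
  have e0 : ((0 : Fin 4) : ℕ) = 0 := rfl
  have e1 : ((1 : Fin 4) : ℕ) = 1 := rfl
  have e2 : ((2 : Fin 4) : ℕ) = 2 := rfl
  have e3 : ((3 : Fin 4) : ℕ) = 3 := rfl
  rw [e0, e1, e2, e3]
  have p0 : ((-1 : R)^(0:ℕ)) = 1 := by norm_num
  have p1 : ((-1 : R)^(1:ℕ)) = -1 := by norm_num
  have p2 : ((-1 : R)^(2:ℕ)) = 1 := by norm_num
  have p3 : ((-1 : R)^(3:ℕ)) = -1 := by norm_num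
  rw [p0, p1, p2, p3, one_smul, one_smul, neg_one_smul, neg_one_smul]
  abel

lemma bdry2 {V : Type} (R : Type) [CommRing R] (a b c : V) (r : R)
    (hab : a ≠ b) (hbc : b ≠ c) (hac : a ≠ c) :
    pathBoundary V R 2 (Finsupp.single ![a,b,c] r) =
      single ![b,c] r - single ![a,c] r + single ![a,b] r := by
  rw [pathBoundary_single, Fin.sum_univ_three]
  have h0 : (![a,b,c] ∘ (0 : Fin 3).succAbove) = ![b,c] := by funext j; fin_cases j <;> rfl
  have h1 : (![a,b,c] ∘ (1 : Fin 3).succAbove) = ![a,c] := by funext j; fin_cases j <;> rfl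
  have h2 : (![a,b,c] ∘ (2 : Fin 3).succAbove) = ![a,b] := by funext j; fin_cases j <;> rfl
  rw [h0, h1, h2, if_pos (isReg2 hbc), if_pos (isReg2 hac), if_pos (isReg2 hab)]
  have e0 : ((0 : Fin 3) : ℕ) = 0 := rfl
  have e1 : ((1 : Fin 3) : ℕ) = 1 := rfl
  have e2 : ((2 : Fin 3) : ℕ) = 2 := rfl
  rw [e0, e1, e2]
  have p0 : ((-1 : R)^(0:ℕ)) = 1 := by norm_num
  have p1 : ((-1 : R)^(1:ℕ)) = -1 := by norm_num
  have p2 : ((-1 : R)^(2:ℕ)) = 1 := by norm_num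
  rw [p0, p1, p2, one_smul, one_smul, neg_one_smul]
  abel

lemma bdry1 {V : Type} (R : Type) [CommRing R] (a b : V) (r : R) :
    pathBoundary V R 1 (Finsupp.single ![a,b] r) = single ![b] r - single ![a] r := by
  rw [pathBoundary_single, Fin.sum_univ_two]
  have h0 : (![a,b] ∘ (0 : Fin 2).succAbove) = ![b] := by funext j; fin_cases j <;> rfl
  have h1 : (![a,b] ∘ (1 : Fin 2).succAbove) = ![a] := by funext j; fin_cases j <;> rfl
  rw [h0, h1, if_pos isReg1, if_pos isReg1]
  have e0 : ((0 : Fin 2) : ℕ) = 0 := rfl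
  have e1 : ((1 : Fin 2) : ℕ) = 1 := rfl
  rw [e0, e1]
  have p0 : ((-1 : R)^(0:ℕ)) = 1 := by norm_num
  have p1 : ((-1 : R)^(1:ℕ)) = -1 := by norm_num
  rw [p0, p1, one_smul, neg_one_smul]
  abel
lemma vec2_eq_iff {V : Type} {a b a' b' : V} : (![a,b] = ![a',b']) ↔ a = a' ∧ b = b' := by
  constructor
  · intro h; exact ⟨congrFun h 0, congrFun h 1⟩
  · rintro ⟨rfl, rfl⟩; rfl

lemma vec3_eq_iff {V : Type} {a b c a' b' c' : V} :
    (![a,b,c] = ![a',b',c']) ↔ a = a' ∧ b = b' ∧ c = c' := by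
  constructor
  · intro h; exact ⟨congrFun h 0, congrFun h 1, congrFun h 2⟩
  · rintro ⟨rfl, rfl, rfl⟩; rfl

lemma vec4_eq_iff {V : Type} {a b c d a' b' c' d' : V} :
    (![a,b,c,d] = ![a',b',c',d']) ↔ a = a' ∧ b = b' ∧ c = c' ∧ d = d' := by
  constructor
  · intro h; exact ⟨congrFun h 0, congrFun h 1, congrFun h 2, congrFun h 3⟩
  · rintro ⟨rfl, rfl, rfl, rfl⟩; rfl

open Classical in
lemma finsupp_eq_sum_of_support_subset {α : Type*} {M : Type*} [AddCommMonoid M]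
    (x : α →₀ M) (S : Finset α) (h : x.support ⊆ S) :
    x = ∑ p ∈ S, Finsupp.single p (x p) := by
  ext q
  rw [Finsupp.finset_sum_apply]
  rw [Finset.sum_congr rfl fun p _ => Finsupp.single_apply (a := p) (b := x p) (a' := q)]
  rw [Finset.sum_ite_eq' S q (fun p => x p)]
  split_ifs with hq
  · rfl
  · exact (Finsupp.notMem_support_iff.mp fun hc => hq (h hc))

-- level function
def trapLv {t : ℕ} : TrapV t → ℕ
  | .top => 0
  | .mid _ => 1
  | .upp _ => 2
  | .head => 3

lemma trapE_lv {t : ℕ} {a b : TrapV t} (h : TrapE t a b) : trapLv b = trapLv a + 1 := by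
  cases a <;> cases b <;> simp [TrapE, trapLv] at h ⊢

lemma allowed_lv {t : ℕ} {d : ℕ} {p : Fin (d+1) → TrapV t}
    (h : IsAllowed (TrapV t) (TrapE t) d p) (k : ℕ) (hk : k ≤ d) :
    trapLv (p ⟨k, by omega⟩) = trapLv (p ⟨0, by omega⟩) + k := by
  induction k with
  | zero => rfl
  | succ m ih =>
    have hm : m ≤ d := by omega
    have := trapE_lv (h ⟨m, by omega⟩)
    have hc : (⟨m, by omega⟩ : Fin d).castSucc = ⟨m, by omega⟩ := rfl
    have hs : (⟨m, by omega⟩ : Fin d).succ = ⟨m+1, by omega⟩ := rfl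
    rw [hc, hs] at this
    rw [this, ih hm]
    omega

lemma allowed_empty_of_ge {t : ℕ} {d : ℕ} (hd : 4 ≤ d) (p : Fin (d+1) → TrapV t) :
    ¬ IsAllowed (TrapV t) (TrapE t) d p := by
  intro h
  have := allowed_lv h d le_rfl
  have h3 : trapLv (p ⟨d, by omega⟩) ≤ 3 := by
    cases p ⟨d, by omega⟩ <;> simp [trapLv]
  omega
lemma lv_eq_zero {t : ℕ} {v : TrapV t} (h : trapLv v = 0) : v = .top := by
  cases v <;> simp [trapLv] at h ⊢
lemma lv_eq_one {t : ℕ} {v : TrapV t} (h : trapLv v = 1) : ∃ i, v = .mid i := by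
  cases v <;> simp [trapLv] at h ⊢
lemma lv_eq_two {t : ℕ} {v : TrapV t} (h : trapLv v = 2) : ∃ i, v = .upp i := by
  cases v <;> simp [trapLv] at h ⊢
lemma lv_eq_three {t : ℕ} {v : TrapV t} (h : trapLv v = 3) : v = .head := by
  cases v <;> simp [trapLv] at h ⊢
lemma lv_le_three {t : ℕ} (v : TrapV t) : trapLv v ≤ 3 := by
  cases v <;> simp [trapLv]

lemma allowed3_char {t : ℕ} {p : Fin 4 → TrapV t} (h : IsAllowed (TrapV t) (TrapE t) 3 p) :
    ∃ i : ZMod t, p = ![.top, .mid i, .upp i, .head] ∨ p = ![.top, .mid i, .upp (i+1), .head] := by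
  have L0 := allowed_lv h 0 (by omega)
  have L1 := allowed_lv h 1 (by omega)
  have L2 := allowed_lv h 2 (by omega)
  have L3 := allowed_lv h 3 (by omega)
  have hle := lv_le_three (p ⟨3, by omega⟩)
  have hz : trapLv (p ⟨0, by omega⟩) = 0 := by omega
  have e0 := lv_eq_zero hz
  obtain ⟨i, e1⟩ := lv_eq_one (by omega : trapLv (p ⟨1, by omega⟩) = 1)
  obtain ⟨j, e2⟩ := lv_eq_two (by omega : trapLv (p ⟨2, by omega⟩) = 2)
  have e3 := lv_eq_three (by omega : trapLv (p ⟨3, by omega⟩) = 3)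
  have h1 := h 1
  have hc : ((1 : Fin 3).castSucc : Fin 4) = ⟨1, by omega⟩ := rfl
  have hs : ((1 : Fin 3).succ : Fin 4) = ⟨2, by omega⟩ := rfl
  rw [hc, hs, e1, e2] at h1
  have hij : j = i ∨ j = i + 1 := h1
  refine ⟨i, ?_⟩
  have hp : ∀ hj : j = i ∨ j = i + 1, True := fun _ => trivial
  rcases hij with rfl | rfl
  · left; funext k; fin_cases k
    · exact e0
    · exact e1
    · exact e2
    · exact e3
  · right; funext k; fin_cases k
    · exact e0
    · exact e1
    · exact e2
    · exact e3

lemma allowed2_char {t : ℕ} {p : Fin 3 → TrapV t} (h : IsAllowed (TrapV t) (TrapE t) 2 p) :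
    ∃ i : ZMod t, p = ![.top, .mid i, .upp i] ∨ p = ![.top, .mid i, .upp (i+1)] ∨
      p = ![.mid i, .upp i, .head] ∨ p = ![.mid i, .upp (i+1), .head] := by
  have L1 := allowed_lv h 1 (by omega)
  have L2 := allowed_lv h 2 (by omega)
  have hle := lv_le_three (p ⟨2, by omega⟩)
  have h0 := h 0
  have h1 := h 1
  have hc0 : ((0 : Fin 2).castSucc : Fin 3) = ⟨0, by omega⟩ := rfl
  have hs0 : ((0 : Fin 2).succ : Fin 3) = ⟨1, by omega⟩ := rfl
  have hc1 : ((1 : Fin 2).castSucc : Fin 3) = ⟨1, by omega⟩ := rfl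
  have hs1 : ((1 : Fin 2).succ : Fin 3) = ⟨2, by omega⟩ := rfl
  rw [hc0, hs0] at h0
  rw [hc1, hs1] at h1
  have h03 : trapLv (p ⟨0, by omega⟩) = 0 ∨ trapLv (p ⟨0, by omega⟩) = 1 := by omega
  rcases h03 with hl | hl
  · have e0 := lv_eq_zero hl
    obtain ⟨i, e1⟩ := lv_eq_one (by omega : trapLv (p ⟨1, by omega⟩) = 1)
    obtain ⟨j, e2⟩ := lv_eq_two (by omega : trapLv (p ⟨2, by omega⟩) = 2)
    rw [e1, e2] at h1
    rcases (h1 : j = i ∨ j = i + 1) with rfl | rfl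
    · exact ⟨_, Or.inl (by funext k; fin_cases k <;> assumption)⟩
    · exact ⟨_, Or.inr (Or.inl (by funext k; fin_cases k <;> assumption))⟩
  · obtain ⟨i, e0⟩ := lv_eq_one hl
    obtain ⟨j, e1⟩ := lv_eq_two (by omega : trapLv (p ⟨1, by omega⟩) = 2)
    have e2 := lv_eq_three (by omega : trapLv (p ⟨2, by omega⟩) = 3)
    rw [e0, e1] at h0
    rcases (h0 : j = i ∨ j = i + 1) with rfl | rfl
    · exact ⟨_, Or.inr (Or.inr (Or.inl (by funext k; fin_cases k <;> assumption)))⟩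
    · exact ⟨_, Or.inr (Or.inr (Or.inr (by funext k; fin_cases k <;> assumption)))⟩

lemma allowed1_char {t : ℕ} {p : Fin 2 → TrapV t} (h : IsAllowed (TrapV t) (TrapE t) 1 p) :
    ∃ i : ZMod t, p = ![.top, .mid i] ∨ p = ![.mid i, .upp i] ∨
      p = ![.mid i, .upp (i+1)] ∨ p = ![.upp i, .head] := by
  have h0 := h 0
  have hc0 : ((0 : Fin 1).castSucc : Fin 2) = ⟨0, by omega⟩ := rfl
  have hs0 : ((0 : Fin 1).succ : Fin 2) = ⟨1, by omega⟩ := rfl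
  rw [hc0, hs0] at h0
  have L1 := allowed_lv h 1 (by omega)
  have hle := lv_le_three (p ⟨1, by omega⟩)
  have h02 : trapLv (p ⟨0, by omega⟩) = 0 ∨ trapLv (p ⟨0, by omega⟩) = 1 ∨
      trapLv (p ⟨0, by omega⟩) = 2 := by omega
  rcases h02 with hl | hl | hl
  · have e0 := lv_eq_zero hl
    obtain ⟨i, e1⟩ := lv_eq_one (by omega : trapLv (p ⟨1, by omega⟩) = 1)
    exact ⟨_, Or.inl (by funext k; fin_cases k <;> assumption)⟩
  · obtain ⟨i, e0⟩ := lv_eq_one hl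
    obtain ⟨j, e1⟩ := lv_eq_two (by omega : trapLv (p ⟨1, by omega⟩) = 2)
    rw [e0, e1] at h0
    rcases (h0 : j = i ∨ j = i + 1) with rfl | rfl
    · exact ⟨_, Or.inr (Or.inl (by funext k; fin_cases k <;> assumption))⟩
    · exact ⟨_, Or.inr (Or.inr (Or.inl (by funext k; fin_cases k <;> assumption)))⟩
  · obtain ⟨i, e0⟩ := lv_eq_two hl
    have e1 := lv_eq_three (by omega : trapLv (p ⟨1, by omega⟩) = 3)
    exact ⟨_, Or.inr (Or.inr (Or.inr (by funext k; fin_cases k <;> assumption)))⟩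
open Finsupp TrapV

section
variable {t : ℕ} [NeZero t]

lemma zsum_shift {M : Type*} [AddCommMonoid M] (f : ZMod t → M) :
    ∑ i : ZMod t, f (i + 1) = ∑ i : ZMod t, f i :=
  Fintype.sum_equiv (Equiv.addRight 1) _ _ (fun _ => rfl)

lemma natCast_bij : Function.Bijective (fun i : Fin t => ((i : ℕ) : ZMod t)) := by
  rw [Fintype.bijective_iff_injective_and_card]
  refine ⟨fun i j h => ?_, by simp [ZMod.card]⟩
  have := congrArg ZMod.val h
  rw [ZMod.val_cast_of_lt i.isLt, ZMod.val_cast_of_lt j.isLt] at this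
  exact Fin.ext this

lemma trapGen_eq (R : Type) [CommRing R] :
    trapGen t R = ∑ i : ZMod t,
      (Finsupp.single ![top, mid i, upp i, head] (1 : R) -
       Finsupp.single ![top, mid i, upp (i+1), head] 1) := by
  rw [trapGen]
  exact Fintype.sum_bijective _ natCast_bij _ _ (fun i => rfl)

lemma allowed_vec3 {a b c d : TrapV t} (h1 : TrapE t a b) (h2 : TrapE t b c)
    (h3 : TrapE t c d) : IsAllowed (TrapV t) (TrapE t) 3 ![a,b,c,d] := by
  intro k; fin_cases k
  · exact h1
  · exact h2
  · exact h3

lemma allowed_vec2 {a b c : TrapV t} (h1 : TrapE t a b) (h2 : TrapE t b c) :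
    IsAllowed (TrapV t) (TrapE t) 2 ![a,b,c] := by
  intro k; fin_cases k
  · exact h1
  · exact h2

lemma allowedLow3_vec {a b c : TrapV t} (h1 : TrapE t a b) (h2 : TrapE t b c) :
    IsAllowedLow (TrapV t) (TrapE t) 3 ![a,b,c] := by
  intro k; fin_cases k
  · exact h1
  · exact h2

lemma allowedLow2_vec {a b : TrapV t} (h1 : TrapE t a b) :
    IsAllowedLow (TrapV t) (TrapE t) 2 ![a,b] := by
  intro k; fin_cases k; exact h1

lemma allowedLow1_vec (q : Fin 1 → TrapV t) : IsAllowedLow (TrapV t) (TrapE t) 1 q := by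
  intro k; exact absurd k.isLt (by omega)

example (i : ZMod t) : TrapE t top (mid i) := trivial
example (i : ZMod t) : TrapE t (mid i) (upp i) := Or.inl rfl
example (i : ZMod t) : TrapE t (mid i) (upp (i+1)) := Or.inr rfl
example (i : ZMod t) : TrapE t (upp i) head := trivial
example (i j : ZMod t) : (TrapV.mid i = TrapV.upp j) = False := by simp
example (i j : ZMod t) : (TrapV.mid i = TrapV.mid j) ↔ i = j := by simp
end
open Finsupp TrapV

lemma sum_eq_two_coeff {ι M : Type*} [Fintype ι] [DecidableEq ι] [AddCommGroup M]
    (f : ι → M) (j1 j2 : ι) (g1 g2 : ι → M)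
    (h : ∀ i, f i = (if i = j1 then g1 i else 0) + (if i = j2 then g2 i else 0)) :
    ∑ i, f i = g1 j1 + g2 j2 := by
  rw [Finset.sum_congr rfl fun i _ => h i, Finset.sum_add_distrib,
    Finset.sum_ite_eq' Finset.univ j1 g1, Finset.sum_ite_eq' Finset.univ j2 g2]
  simp

section
variable {t : ℕ} [Fact (1 < t)] [NeZero t] {R : Type} [CommRing R]

example (a b : ZMod t → R) (j : ZMod t) :
    (∑ i : ZMod t,
      ((single ![mid i, upp i, head] (a i) - single ![top, upp i, head] (a i)
        + single ![top, mid i, head] (a i) - single ![top, mid i, upp i] (a i))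
       + (single ![mid i, upp (i+1), head] (b i) - single ![top, upp (i+1), head] (b i)
        + single ![top, mid i, head] (b i) - single ![top, mid i, upp (i+1)] (b i))
       : (Fin 3 → TrapV t) →₀ R))
      ![top, upp j, head] = -(a j) + -(b (j-1)) := by
  rw [Finsupp.finset_sum_apply]
  refine sum_eq_two_coeff _ j (j-1) (fun i => -(a i)) (fun i => -(b i)) (fun i => ?_)
  by_cases h1 : i = j
  · subst h1
    have h2 : ¬ (i = i - 1) := by
      intro hc
      exact one_ne_zero (by linear_combination hc : (1 : ZMod t) = 0)
    simp [Finsupp.sub_apply, Finsupp.add_apply, Finsupp.single_apply, vec3_eq_iff, h2,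
      sub_eq_iff_eq_add]
  · by_cases h2 : i = j - 1
    · subst h2
      simp [Finsupp.sub_apply, Finsupp.add_apply, Finsupp.single_apply, vec3_eq_iff, h1,
        sub_add_cancel]
    · have h3 : ¬ (i + 1 = j) := fun hc => h2 (by linear_combination hc)
      simp [Finsupp.sub_apply, Finsupp.add_apply, Finsupp.single_apply, vec3_eq_iff, h1, h2, h3]
end
section
variable {t : ℕ} {R : Type} [CommRing R]

lemma zmod_all_eq [NeZero t] (a : ZMod t → R) (ha : ∀ j, a j = a (j - 1)) (z : ZMod t) :
    a z = a 0 := by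
  have key : ∀ n : ℕ, a (n : ZMod t) = a 0 := by
    intro n
    induction n with
    | zero => norm_num
    | succ m ih =>
      have := ha ((m+1 : ℕ) : ZMod t)
      rw [this]
      have e : ((m+1 : ℕ) : ZMod t) - 1 = (m : ℕ) := by push_cast; ring
      rw [e, ih]
  have := key z.val
  rwa [ZMod.natCast_rightInverse z] at this

lemma omega3_eq (ht : 2 ≤ t) (x : (Fin 4 → TrapV t) →₀ R)
    (hx : x ∈ Omega (TrapV t) (TrapE t) R 3) :
    x = (x ![.top, .mid 0, .upp 0, .head]) • trapGen t R := by
  haveI : NeZero t := ⟨by omega⟩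
  haveI : Fact (1 < t) := ⟨by omega⟩
  classical
  obtain ⟨h1, h2⟩ := Submodule.mem_inf.mp hx
  set P : ZMod t → (Fin 4 → TrapV t) := fun i => ![.top, .mid i, .upp i, .head] with hP
  set Q : ZMod t → (Fin 4 → TrapV t) := fun i => ![.top, .mid i, .upp (i+1), .head] with hQ
  set a : ZMod t → R := fun i => x (P i) with haDef
  set b : ZMod t → R := fun i => x (Q i) with hbDef
  -- decomposition
  have hPinj : Function.Injective P := by
    intro i j hij
    have := congrFun hij 1
    simpa [hP] using this
  have hQinj : Function.Injective Q := by
    intro i j hij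
    have := congrFun hij 1
    simpa [hQ] using this
  have hPQ : ∀ i j, P i ≠ Q j := by
    intro i j hij
    have e1 := congrFun hij 1
    have e2 := congrFun hij 2
    simp [hP, hQ] at e1 e2
    rw [e1] at e2
    exact one_ne_zero (by linear_combination -e2 : (1 : ZMod t) = 0)
  have hdisj : Disjoint (Finset.univ.image P) (Finset.univ.image Q) := by
    rw [Finset.disjoint_left]
    rintro p hp hq
    obtain ⟨i, _, rfl⟩ := Finset.mem_image.mp hp
    obtain ⟨j, _, hj⟩ := Finset.mem_image.mp hq
    exact hPQ i j hj.symm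
  have hxe : x = ∑ i : ZMod t, (Finsupp.single (P i) (a i) + Finsupp.single (Q i) (b i)) := by
    have hsub : x.support ⊆ Finset.univ.image P ∪ Finset.univ.image Q := by
      intro p hp
      have hall : IsAllowed (TrapV t) (TrapE t) 3 p := by
        by_contra hc
        exact Finsupp.mem_support_iff.mp hp ((Finsupp.mem_supported' R x).mp h1 p hc)
      obtain ⟨i, hi | hi⟩ := allowed3_char hall
      · exact Finset.mem_union_left _ (Finset.mem_image.mpr ⟨i, Finset.mem_univ i, hi.symm⟩)
      · exact Finset.mem_union_right _ (Finset.mem_image.mpr ⟨i, Finset.mem_univ i, hi.symm⟩)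
    rw [finsupp_eq_sum_of_support_subset x _ hsub, Finset.sum_union hdisj,
      Finset.sum_image (fun i _ j _ h => hPinj h), Finset.sum_image (fun i _ j _ h => hQinj h),
      ← Finset.sum_add_distrib]
  -- boundary formula
  have hbd : pathBoundary (TrapV t) R 3 x = ∑ i : ZMod t,
      ((Finsupp.single ![.mid i, .upp i, .head] (a i)
        - Finsupp.single ![.top, .upp i, .head] (a i)
        + Finsupp.single ![.top, .mid i, .head] (a i)
        - Finsupp.single ![.top, .mid i, .upp i] (a i))
       + (Finsupp.single ![.mid i, .upp (i+1), .head] (b i)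
        - Finsupp.single ![.top, .upp (i+1), .head] (b i)
        + Finsupp.single ![.top, .mid i, .head] (b i)
        - Finsupp.single ![.top, .mid i, .upp (i+1)] (b i))) := by
    rw [hxe, map_sum]
    refine Finset.sum_congr rfl fun i _ => ?_
    rw [map_add, bdry3 R _ _ _ _ _ (by simp) (by simp) (by simp) (by simp) (by simp),
      bdry3 R _ _ _ _ _ (by simp) (by simp) (by simp) (by simp) (by simp)]
  have hsupp2 : ∀ q, ¬ IsAllowedLow (TrapV t) (TrapE t) 3 q → pathBoundary (TrapV t) R 3 x q = 0 :=
    fun q hq => (Finsupp.mem_supported' R _).mp (Submodule.mem_comap.mp h2) q hq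
  -- equation at ![top, upp j, head]
  have eqT : ∀ j : ZMod t, -(a j) + -(b (j-1)) = 0 := by
    intro j
    have hnal : ¬ IsAllowedLow (TrapV t) (TrapE t) 3 ![TrapV.top, .upp j, .head] := by
      intro hal
      have h := hal ⟨0, by omega⟩
      exact h
    have := hsupp2 _ hnal
    rw [hbd, Finsupp.finset_sum_apply] at this
    rw [← this]
    refine (sum_eq_two_coeff _ j (j-1) (fun i => -(a i)) (fun i => -(b i)) (fun i => ?_)).symm
    by_cases hij : i = j
    · subst hij
      have hne : ¬ (i = i - 1) := fun hc =>
        one_ne_zero (by linear_combination hc : (1 : ZMod t) = 0)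
      simp [Finsupp.sub_apply, Finsupp.add_apply, Finsupp.single_apply, vec3_eq_iff, hne,
        sub_eq_iff_eq_add]
    · by_cases hij2 : i = j - 1
      · subst hij2
        simp [Finsupp.sub_apply, Finsupp.add_apply, Finsupp.single_apply, vec3_eq_iff, hij,
          sub_add_cancel]
      · have h3 : ¬ (i + 1 = j) := fun hc => hij2 (by linear_combination hc)
        simp [Finsupp.sub_apply, Finsupp.add_apply, Finsupp.single_apply, vec3_eq_iff, hij,
          hij2, h3]
  -- equation at ![top, mid i, head]
  have eqM : ∀ j : ZMod t, a j + b j = 0 := by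
    intro j
    have hnal : ¬ IsAllowedLow (TrapV t) (TrapE t) 3 ![TrapV.top, .mid j, .head] := by
      intro hal
      have h := hal ⟨1, by omega⟩
      exact h
    have := hsupp2 _ hnal
    rw [hbd, Finsupp.finset_sum_apply] at this
    rw [← this]
    refine (sum_eq_two_coeff _ j j (fun i => a i) (fun i => b i) (fun i => ?_)).symm
    by_cases hij : i = j
    · subst hij
      simp [Finsupp.sub_apply, Finsupp.add_apply, Finsupp.single_apply, vec3_eq_iff]
    · simp [Finsupp.sub_apply, Finsupp.add_apply, Finsupp.single_apply, vec3_eq_iff, hij]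
  -- all a equal
  have haconst : ∀ j, a j = a (j - 1) := by
    intro j
    have e1 := eqT j
    have e2 := eqM (j - 1)
    linear_combination -e1 - e2
  have haz : ∀ z, a z = a 0 := zmod_all_eq a haconst
  have hbz : ∀ z, b z = -(a 0) := by
    intro z
    have := eqM z
    rw [haz z] at this
    linear_combination this
  -- conclude
  have hx0 : x ![TrapV.top, .mid 0, .upp 0, .head] = a 0 := rfl
  rw [hx0, hxe, trapGen_eq, Finset.smul_sum]
  refine Finset.sum_congr rfl fun i _ => ?_
  rw [haz i, hbz i]
  simp only [hP, hQ]
  rw [smul_sub, Finsupp.smul_single, Finsupp.smul_single]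
  simp [Finsupp.single_neg, sub_eq_add_neg]
end
lemma vec1_eq_iff {V : Type} {a b : V} : (![a] = ![b]) ↔ a = b := by
  constructor
  · intro h; exact congrFun h 0
  · rintro rfl; rfl

lemma sum_eq_one_coeff {ι M : Type*} [Fintype ι] [DecidableEq ι] [AddCommGroup M]
    (f : ι → M) (j : ι) (g : ι → M) (h : ∀ i, f i = if i = j then g i else 0) :
    ∑ i, f i = g j := by
  rw [Finset.sum_congr rfl fun i _ => h i, Finset.sum_ite_eq' Finset.univ j g]
  simp

section
open Finsupp TrapV
variable {t : ℕ} [NeZero t] [Fact (1 < t)] {R : Type} [CommRing R]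

lemma bdry_trapGen :
    pathBoundary (TrapV t) R 3 (trapGen t R) = ∑ i : ZMod t,
      (Finsupp.single ![mid i, upp i, head] (1:R) - Finsupp.single ![mid i, upp (i+1), head] 1
       - Finsupp.single ![top, mid i, upp i] 1 + Finsupp.single ![top, mid i, upp (i+1)] 1) := by
  rw [trapGen_eq, map_sum]
  have hterm : ∀ i ∈ Finset.univ, pathBoundary (TrapV t) R 3
      (Finsupp.single ![top, mid i, upp i, head] (1:R)
        - Finsupp.single ![top, mid i, upp (i+1), head] 1) =
      (Finsupp.single ![mid i, upp i, head] (1:R) - Finsupp.single ![mid i, upp (i+1), head] 1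
       - Finsupp.single ![top, mid i, upp i] 1 + Finsupp.single ![top, mid i, upp (i+1)] 1)
      + (Finsupp.single ![top, upp (i+1), head] (1:R) - Finsupp.single ![top, upp i, head] 1) := by
    intro i _
    rw [map_sub, bdry3 R _ _ _ _ _ (by simp) (by simp) (by simp) (by simp) (by simp),
      bdry3 R _ _ _ _ _ (by simp) (by simp) (by simp) (by simp) (by simp)]
    abel
  rw [Finset.sum_congr rfl hterm, Finset.sum_add_distrib, Finset.sum_sub_distrib,
    zsum_shift (fun i => Finsupp.single ![top, upp i, head] (1:R))]
  simp

lemma trapGen_mem : trapGen t R ∈ Omega (TrapV t) (TrapE t) R 3 := by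
  rw [Omega, Submodule.mem_inf]
  constructor
  · rw [Finsupp.mem_supported', trapGen_eq]
    intro p hp
    rw [Finsupp.finset_sum_apply]
    refine Finset.sum_eq_zero fun i _ => ?_
    simp only [Finsupp.sub_apply]
    rw [Finsupp.single_eq_of_ne'
        (fun h => hp (by rw [← h]; exact allowed_vec3 trivial (Or.inl rfl) trivial)),
      Finsupp.single_eq_of_ne'
        (fun h => hp (by rw [← h]; exact allowed_vec3 trivial (Or.inr rfl) trivial)),
      sub_zero]
  · rw [Submodule.mem_comap, Finsupp.mem_supported', bdry_trapGen]
    intro q hq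
    rw [Finsupp.finset_sum_apply]
    refine Finset.sum_eq_zero fun i _ => ?_
    simp only [Finsupp.sub_apply, Finsupp.add_apply]
    rw [Finsupp.single_eq_of_ne'
        (fun h => hq (by rw [← h]; exact allowedLow3_vec (Or.inl rfl) trivial)),
      Finsupp.single_eq_of_ne'
        (fun h => hq (by rw [← h]; exact allowedLow3_vec (Or.inr rfl) trivial)),
      Finsupp.single_eq_of_ne'
        (fun h => hq (by rw [← h]; exact allowedLow3_vec trivial (Or.inl rfl))),
      Finsupp.single_eq_of_ne'
        (fun h => hq (by rw [← h]; exact allowedLow3_vec trivial (Or.inr rfl)))]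
    simp

lemma trapGen_coeff : (trapGen t R) ![top, mid 0, upp 0, head] = 1 := by
  classical
  rw [trapGen_eq, Finsupp.finset_sum_apply]
  refine sum_eq_one_coeff _ 0 (fun _ => 1) fun i => ?_
  by_cases hi : i = (0 : ZMod t)
  · subst hi
    have hne : (0 : ZMod t) + 1 ≠ 0 := fun hc =>
      one_ne_zero (by linear_combination hc : (1 : ZMod t) = 0)
    simp [Finsupp.sub_apply, Finsupp.single_apply, vec4_eq_iff, hne]
  · simp [Finsupp.sub_apply, Finsupp.single_apply, vec4_eq_iff, hi]

lemma bdry_trapGen_coeff :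
    (pathBoundary (TrapV t) R 3 (trapGen t R)) ![mid 0, upp 0, head] = 1 := by
  classical
  rw [bdry_trapGen, Finsupp.finset_sum_apply]
  refine sum_eq_one_coeff _ 0 (fun _ => 1) fun i => ?_
  by_cases hi : i = (0 : ZMod t)
  · subst hi
    have hne : (0 : ZMod t) + 1 ≠ 0 := fun hc =>
      one_ne_zero (by linear_combination hc : (1 : ZMod t) = 0)
    simp [Finsupp.sub_apply, Finsupp.add_apply, Finsupp.single_apply, vec3_eq_iff, hne]
  · simp [Finsupp.sub_apply, Finsupp.add_apply, Finsupp.single_apply, vec3_eq_iff, hi]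

lemma omega_high_zero {n : ℕ} (hn : 4 ≤ n) (x : (Fin (n+1) → TrapV t) →₀ R)
    (hx : x ∈ Omega (TrapV t) (TrapE t) R n) : x = 0 := by
  obtain ⟨h1, -⟩ := Submodule.mem_inf.mp hx
  ext p
  by_contra hc
  exact allowed_empty_of_ge hn p
    ((Finsupp.mem_supported R x).mp h1 (Finsupp.mem_support_iff.mpr hc))
end
section
open Finsupp TrapV
variable {t : ℕ} {R : Type} [CommRing R]

lemma omega2_case (ht : 2 ≤ t) (x : (Fin 3 → TrapV t) →₀ R)
    (hx : x ∈ Omega (TrapV t) (TrapE t) R 2) (hb : pathBoundary (TrapV t) R 2 x = 0) :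
    ∃ y ∈ Omega (TrapV t) (TrapE t) R 3, pathBoundary (TrapV t) R 3 y = x := by
  haveI : NeZero t := ⟨by omega⟩
  haveI : Fact (1 < t) := ⟨by omega⟩
  classical
  obtain ⟨h1, -⟩ := Submodule.mem_inf.mp hx
  set A0 : ZMod t → (Fin 3 → TrapV t) := fun i => ![.top, .mid i, .upp i] with hA0
  set A1 : ZMod t → (Fin 3 → TrapV t) := fun i => ![.top, .mid i, .upp (i+1)] with hA1
  set B0 : ZMod t → (Fin 3 → TrapV t) := fun i => ![.mid i, .upp i, .head] with hB0
  set B1 : ZMod t → (Fin 3 → TrapV t) := fun i => ![.mid i, .upp (i+1), .head] with hB1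
  set c0 : ZMod t → R := fun i => x (A0 i) with hc0
  set c1 : ZMod t → R := fun i => x (A1 i) with hc1
  set d0 : ZMod t → R := fun i => x (B0 i) with hd0
  set d1 : ZMod t → R := fun i => x (B1 i) with hd1
  have hone : ∀ j : ZMod t, j + 1 ≠ j := fun j hc =>
    one_ne_zero (by linear_combination hc : (1 : ZMod t) = 0)
  have hone' : ∀ j : ZMod t, j ≠ j + 1 := fun j hc => hone j hc.symm
  have hone'' : ∀ j : ZMod t, j ≠ j - 1 := fun j hc =>
    one_ne_zero (by linear_combination hc : (1 : ZMod t) = 0)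
  -- injectivity and disjointness
  have hA0inj : Function.Injective A0 := fun i j h => by simpa [hA0] using congrFun h 1
  have hA1inj : Function.Injective A1 := fun i j h => by simpa [hA1] using congrFun h 1
  have hB0inj : Function.Injective B0 := fun i j h => by simpa [hB0] using congrFun h 0
  have hB1inj : Function.Injective B1 := fun i j h => by simpa [hB1] using congrFun h 0
  have hA0A1 : ∀ i j, A0 i ≠ A1 j := by
    intro i j hij
    have e1 := congrFun hij 1
    have e2 := congrFun hij 2
    simp [hA0, hA1] at e1 e2
    rw [e1] at e2
    exact hone' j e2
  have hB0B1 : ∀ i j, B0 i ≠ B1 j := by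
    intro i j hij
    have e1 := congrFun hij 0
    have e2 := congrFun hij 1
    simp [hB0, hB1] at e1 e2
    rw [e1] at e2
    exact hone' j e2
  have hAB : ∀ (f : ZMod t → Fin 3 → TrapV t), (f = A0 ∨ f = A1) →
      ∀ (g : ZMod t → Fin 3 → TrapV t), (g = B0 ∨ g = B1) → ∀ i j, f i ≠ g j := by
    intro f hf g hg i j hij
    have e0 := congrFun hij 0
    rcases hf with rfl | rfl <;> rcases hg with rfl | rfl <;> simp [hA0, hA1, hB0, hB1] at e0
  -- decomposition
  have hxe : x = ∑ i : ZMod t, (Finsupp.single (A0 i) (c0 i) + Finsupp.single (A1 i) (c1 i)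
      + Finsupp.single (B0 i) (d0 i) + Finsupp.single (B1 i) (d1 i)) := by
    have hsub : x.support ⊆ ((Finset.univ.image A0 ∪ Finset.univ.image A1) ∪
        (Finset.univ.image B0 ∪ Finset.univ.image B1)) := by
      intro p hp
      have hall : IsAllowed (TrapV t) (TrapE t) 2 p := by
        by_contra hc
        exact Finsupp.mem_support_iff.mp hp ((Finsupp.mem_supported' R x).mp h1 p hc)
      obtain ⟨i, hi | hi | hi | hi⟩ := allowed2_char hall
      · exact Finset.mem_union_left _ (Finset.mem_union_left _
          (Finset.mem_image.mpr ⟨i, Finset.mem_univ i, hi.symm⟩))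
      · exact Finset.mem_union_left _ (Finset.mem_union_right _
          (Finset.mem_image.mpr ⟨i, Finset.mem_univ i, hi.symm⟩))
      · exact Finset.mem_union_right _ (Finset.mem_union_left _
          (Finset.mem_image.mpr ⟨i, Finset.mem_univ i, hi.symm⟩))
      · exact Finset.mem_union_right _ (Finset.mem_union_right _
          (Finset.mem_image.mpr ⟨i, Finset.mem_univ i, hi.symm⟩))
    have hd1' : Disjoint (Finset.univ.image A0) (Finset.univ.image A1) := by
      rw [Finset.disjoint_left]
      rintro p hp hq
      obtain ⟨i, -, rfl⟩ := Finset.mem_image.mp hp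
      obtain ⟨j, -, hj⟩ := Finset.mem_image.mp hq
      exact hA0A1 i j hj.symm
    have hd2' : Disjoint (Finset.univ.image B0) (Finset.univ.image B1) := by
      rw [Finset.disjoint_left]
      rintro p hp hq
      obtain ⟨i, -, rfl⟩ := Finset.mem_image.mp hp
      obtain ⟨j, -, hj⟩ := Finset.mem_image.mp hq
      exact hB0B1 i j hj.symm
    have hd3' : Disjoint (Finset.univ.image A0 ∪ Finset.univ.image A1)
        (Finset.univ.image B0 ∪ Finset.univ.image B1) := by
      rw [Finset.disjoint_left]
      rintro p hp hq
      rw [Finset.mem_union] at hp hq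
      obtain hp | hp := hp <;> obtain ⟨i, -, rfl⟩ := Finset.mem_image.mp hp <;>
        obtain hq | hq := hq <;> obtain ⟨j, -, hj⟩ := Finset.mem_image.mp hq
      · exact hAB A0 (Or.inl rfl) B0 (Or.inl rfl) i j hj.symm
      · exact hAB A0 (Or.inl rfl) B1 (Or.inr rfl) i j hj.symm
      · exact hAB A1 (Or.inr rfl) B0 (Or.inl rfl) i j hj.symm
      · exact hAB A1 (Or.inr rfl) B1 (Or.inr rfl) i j hj.symm
    rw [finsupp_eq_sum_of_support_subset x _ hsub, Finset.sum_union hd3',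
      Finset.sum_union hd1', Finset.sum_union hd2',
      Finset.sum_image (fun i _ j _ h => hA0inj h), Finset.sum_image (fun i _ j _ h => hA1inj h),
      Finset.sum_image (fun i _ j _ h => hB0inj h), Finset.sum_image (fun i _ j _ h => hB1inj h),
      ← Finset.sum_add_distrib, ← Finset.sum_add_distrib, ← Finset.sum_add_distrib]
    refine Finset.sum_congr rfl fun i _ => ?_
    abel
  -- boundary expansion
  have hbd : pathBoundary (TrapV t) R 2 x = ∑ i : ZMod t,
      ((Finsupp.single ![.mid i, .upp i] (c0 i) - Finsupp.single ![.top, .upp i] (c0 i)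
        + Finsupp.single ![.top, .mid i] (c0 i))
       + (Finsupp.single ![.mid i, .upp (i+1)] (c1 i) - Finsupp.single ![.top, .upp (i+1)] (c1 i)
        + Finsupp.single ![.top, .mid i] (c1 i))
       + (Finsupp.single ![.upp i, .head] (d0 i) - Finsupp.single ![.mid i, .head] (d0 i)
        + Finsupp.single ![.mid i, .upp i] (d0 i))
       + (Finsupp.single ![.upp (i+1), .head] (d1 i) - Finsupp.single ![.mid i, .head] (d1 i)
        + Finsupp.single ![.mid i, .upp (i+1)] (d1 i))) := by
    rw [hxe, map_sum]
    refine Finset.sum_congr rfl fun i _ => ?_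
    simp only [hA0, hA1, hB0, hB1]
    rw [map_add, map_add, map_add,
      bdry2 R _ _ _ _ (by simp) (by simp) (by simp),
      bdry2 R _ _ _ _ (by simp) (by simp) (by simp),
      bdry2 R _ _ _ _ (by simp) (by simp) (by simp),
      bdry2 R _ _ _ _ (by simp) (by simp) (by simp)]
  have hzero : ∀ pt : Fin 2 → TrapV t, (∑ i : ZMod t,
      ((Finsupp.single ![.mid i, .upp i] (c0 i) - Finsupp.single ![.top, .upp i] (c0 i)
        + Finsupp.single ![.top, .mid i] (c0 i))
       + (Finsupp.single ![.mid i, .upp (i+1)] (c1 i) - Finsupp.single ![.top, .upp (i+1)] (c1 i)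
        + Finsupp.single ![.top, .mid i] (c1 i))
       + (Finsupp.single ![.upp i, .head] (d0 i) - Finsupp.single ![.mid i, .head] (d0 i)
        + Finsupp.single ![.mid i, .upp i] (d0 i))
       + (Finsupp.single ![.upp (i+1), .head] (d1 i) - Finsupp.single ![.mid i, .head] (d1 i)
        + Finsupp.single ![.mid i, .upp (i+1)] (d1 i))) : (Fin 2 → TrapV t) →₀ R) pt = 0 := by
    intro pt
    rw [← hbd, hb]
    rfl
  -- equations
  have E1 : ∀ j : ZMod t, -(c0 j) + -(c1 (j-1)) = 0 := by
    intro j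
    have := hzero ![.top, .upp j]
    rw [Finsupp.finset_sum_apply] at this
    rw [← this]
    refine (sum_eq_two_coeff _ j (j-1) (fun i => -(c0 i)) (fun i => -(c1 i)) (fun i => ?_)).symm
    by_cases hij : i = j
    · subst hij
      simp [Finsupp.sub_apply, Finsupp.add_apply, Finsupp.single_apply, vec2_eq_iff,
        hone'' i, sub_eq_iff_eq_add]
    · by_cases hij2 : i = j - 1
      · subst hij2
        simp [Finsupp.sub_apply, Finsupp.add_apply, Finsupp.single_apply, vec2_eq_iff, hij,
          sub_add_cancel]
      · have h3 : ¬ (i + 1 = j) := fun hc => hij2 (by linear_combination hc)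
        simp [Finsupp.sub_apply, Finsupp.add_apply, Finsupp.single_apply, vec2_eq_iff, hij,
          hij2, h3]
  have E2 : ∀ j : ZMod t, c0 j + c1 j = 0 := by
    intro j
    have := hzero ![.top, .mid j]
    rw [Finsupp.finset_sum_apply] at this
    rw [← this]
    refine (sum_eq_two_coeff _ j j (fun i => c0 i) (fun i => c1 i) (fun i => ?_)).symm
    by_cases hij : i = j
    · subst hij
      simp [Finsupp.sub_apply, Finsupp.add_apply, Finsupp.single_apply, vec2_eq_iff]
    · simp [Finsupp.sub_apply, Finsupp.add_apply, Finsupp.single_apply, vec2_eq_iff, hij]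
  have E3 : ∀ j : ZMod t, c0 j + d0 j = 0 := by
    intro j
    have := hzero ![.mid j, .upp j]
    rw [Finsupp.finset_sum_apply] at this
    rw [← this]
    refine (sum_eq_two_coeff _ j j (fun i => c0 i) (fun i => d0 i) (fun i => ?_)).symm
    by_cases hij : i = j
    · subst hij
      simp [Finsupp.sub_apply, Finsupp.add_apply, Finsupp.single_apply, vec2_eq_iff, hone i]
    · simp [Finsupp.sub_apply, Finsupp.add_apply, Finsupp.single_apply, vec2_eq_iff, hij]
  have E4 : ∀ j : ZMod t, c1 j + d1 j = 0 := by
    intro j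
    have := hzero ![.mid j, .upp (j+1)]
    rw [Finsupp.finset_sum_apply] at this
    rw [← this]
    refine (sum_eq_two_coeff _ j j (fun i => c1 i) (fun i => d1 i) (fun i => ?_)).symm
    by_cases hij : i = j
    · subst hij
      simp [Finsupp.sub_apply, Finsupp.add_apply, Finsupp.single_apply, vec2_eq_iff, hone' i]
    · simp [Finsupp.sub_apply, Finsupp.add_apply, Finsupp.single_apply, vec2_eq_iff, hij]
  -- solve
  have hcconst : ∀ j, c0 j = c0 (j - 1) := by
    intro j
    have e1 := E1 j
    have e2 := E2 (j - 1)
    linear_combination -e1 - e2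
  have hc0z : ∀ z, c0 z = c0 0 := zmod_all_eq c0 hcconst
  have hc1z : ∀ z, c1 z = -(c0 0) := fun z => by linear_combination E2 z - hc0z z
  have hd0z : ∀ z, d0 z = -(c0 0) := fun z => by linear_combination E3 z - hc0z z
  have hd1z : ∀ z, d1 z = c0 0 := fun z => by linear_combination E4 z - hc1z z
  -- conclude
  refine ⟨(-(c0 0)) • trapGen t R, Submodule.smul_mem _ _ trapGen_mem, ?_⟩
  rw [map_smul, bdry_trapGen, hxe, Finset.smul_sum]
  refine Finset.sum_congr rfl fun i _ => ?_
  rw [hc0z i, hc1z i, hd0z i, hd1z i]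
  simp only [hA0, hA1, hB0, hB1]
  simp only [smul_sub, smul_add, Finsupp.smul_single, smul_eq_mul, mul_one,
    Finsupp.single_neg, neg_neg]
  abel
end
lemma sum_eq_three_coeff {ι M : Type*} [Fintype ι] [DecidableEq ι] [AddCommGroup M]
    (f : ι → M) (j1 j2 j3 : ι) (g1 g2 g3 : ι → M)
    (h : ∀ i, f i = (if i = j1 then g1 i else 0) + (if i = j2 then g2 i else 0)
      + (if i = j3 then g3 i else 0)) :
    ∑ i, f i = g1 j1 + g2 j2 + g3 j3 := by
  rw [Finset.sum_congr rfl fun i _ => h i, Finset.sum_add_distrib, Finset.sum_add_distrib,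
    Finset.sum_ite_eq' Finset.univ j1 g1, Finset.sum_ite_eq' Finset.univ j2 g2,
    Finset.sum_ite_eq' Finset.univ j3 g3]
  simp

section
open Finsupp TrapV
variable {t : ℕ} {R : Type} [CommRing R]

lemma omega1_case (ht : 2 ≤ t) (x : (Fin 2 → TrapV t) →₀ R)
    (hx : x ∈ Omega (TrapV t) (TrapE t) R 1) (hb : pathBoundary (TrapV t) R 1 x = 0) :
    ∃ y ∈ Omega (TrapV t) (TrapE t) R 2, pathBoundary (TrapV t) R 2 y = x := by
  haveI : NeZero t := ⟨by omega⟩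
  haveI : Fact (1 < t) := ⟨by omega⟩
  classical
  obtain ⟨h1, -⟩ := Submodule.mem_inf.mp hx
  set e0 : ZMod t → (Fin 2 → TrapV t) := fun i => ![.top, .mid i] with he0
  set e1 : ZMod t → (Fin 2 → TrapV t) := fun i => ![.mid i, .upp i] with he1
  set e2 : ZMod t → (Fin 2 → TrapV t) := fun i => ![.mid i, .upp (i+1)] with he2
  set e3 : ZMod t → (Fin 2 → TrapV t) := fun i => ![.upp i, .head] with he3
  set α : ZMod t → R := fun i => x (e0 i) with hα
  set β0 : ZMod t → R := fun i => x (e1 i) with hβ0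
  set β1 : ZMod t → R := fun i => x (e2 i) with hβ1
  set γ : ZMod t → R := fun i => x (e3 i) with hγ
  have hone : ∀ j : ZMod t, j + 1 ≠ j := fun j hc =>
    one_ne_zero (by linear_combination hc : (1 : ZMod t) = 0)
  have hone' : ∀ j : ZMod t, j ≠ j + 1 := fun j hc => hone j hc.symm
  -- injectivity / disjointness
  have he0inj : Function.Injective e0 := fun i j h => by simpa [he0] using congrFun h 1
  have he1inj : Function.Injective e1 := fun i j h => by simpa [he1] using congrFun h 0
  have he2inj : Function.Injective e2 := fun i j h => by simpa [he2] using congrFun h 0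
  have he3inj : Function.Injective e3 := fun i j h => by simpa [he3] using congrFun h 0
  have h01 : ∀ i j, e0 i ≠ e1 j := fun i j h => by simpa [he0, he1] using congrFun h 0
  have h02 : ∀ i j, e0 i ≠ e2 j := fun i j h => by simpa [he0, he2] using congrFun h 0
  have h03 : ∀ i j, e0 i ≠ e3 j := fun i j h => by simpa [he0, he3] using congrFun h 0
  have h13 : ∀ i j, e1 i ≠ e3 j := fun i j h => by simpa [he1, he3] using congrFun h 0
  have h23 : ∀ i j, e2 i ≠ e3 j := fun i j h => by simpa [he2, he3] using congrFun h 0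
  have h12 : ∀ i j, e1 i ≠ e2 j := by
    intro i j hij
    have a0 := congrFun hij 0
    have a1 := congrFun hij 1
    simp [he1, he2] at a0 a1
    rw [a0] at a1
    exact hone' j a1
  -- decomposition
  have hxe : x = ∑ i : ZMod t, (Finsupp.single (e0 i) (α i) + Finsupp.single (e1 i) (β0 i)
      + Finsupp.single (e2 i) (β1 i) + Finsupp.single (e3 i) (γ i)) := by
    have hsub : x.support ⊆ ((Finset.univ.image e0 ∪ Finset.univ.image e1) ∪
        (Finset.univ.image e2 ∪ Finset.univ.image e3)) := by
      intro p hp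
      have hall : IsAllowed (TrapV t) (TrapE t) 1 p := by
        by_contra hc
        exact Finsupp.mem_support_iff.mp hp ((Finsupp.mem_supported' R x).mp h1 p hc)
      obtain ⟨i, hi | hi | hi | hi⟩ := allowed1_char hall
      · exact Finset.mem_union_left _ (Finset.mem_union_left _
          (Finset.mem_image.mpr ⟨i, Finset.mem_univ i, hi.symm⟩))
      · exact Finset.mem_union_left _ (Finset.mem_union_right _
          (Finset.mem_image.mpr ⟨i, Finset.mem_univ i, hi.symm⟩))
      · exact Finset.mem_union_right _ (Finset.mem_union_left _
          (Finset.mem_image.mpr ⟨i, Finset.mem_univ i, hi.symm⟩))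
      · exact Finset.mem_union_right _ (Finset.mem_union_right _
          (Finset.mem_image.mpr ⟨i, Finset.mem_univ i, hi.symm⟩))
    have hd1' : Disjoint (Finset.univ.image e0) (Finset.univ.image e1) := by
      rw [Finset.disjoint_left]
      rintro p hp hq
      obtain ⟨i, -, rfl⟩ := Finset.mem_image.mp hp
      obtain ⟨j, -, hj⟩ := Finset.mem_image.mp hq
      exact h01 i j hj.symm
    have hd2' : Disjoint (Finset.univ.image e2) (Finset.univ.image e3) := by
      rw [Finset.disjoint_left]
      rintro p hp hq
      obtain ⟨i, -, rfl⟩ := Finset.mem_image.mp hp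
      obtain ⟨j, -, hj⟩ := Finset.mem_image.mp hq
      exact h23 i j hj.symm
    have hd3' : Disjoint (Finset.univ.image e0 ∪ Finset.univ.image e1)
        (Finset.univ.image e2 ∪ Finset.univ.image e3) := by
      rw [Finset.disjoint_left]
      rintro p hp hq
      rw [Finset.mem_union] at hp hq
      obtain hp | hp := hp <;> obtain ⟨i, -, rfl⟩ := Finset.mem_image.mp hp <;>
        obtain hq | hq := hq <;> obtain ⟨j, -, hj⟩ := Finset.mem_image.mp hq
      · exact h02 i j hj.symm
      · exact h03 i j hj.symm
      · exact h12 i j hj.symm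
      · exact h13 i j hj.symm
    rw [finsupp_eq_sum_of_support_subset x _ hsub, Finset.sum_union hd3',
      Finset.sum_union hd1', Finset.sum_union hd2',
      Finset.sum_image (fun i _ j _ h => he0inj h), Finset.sum_image (fun i _ j _ h => he1inj h),
      Finset.sum_image (fun i _ j _ h => he2inj h), Finset.sum_image (fun i _ j _ h => he3inj h),
      ← Finset.sum_add_distrib, ← Finset.sum_add_distrib, ← Finset.sum_add_distrib]
    refine Finset.sum_congr rfl fun i _ => ?_
    abel
  -- boundary expansion
  have hbd : pathBoundary (TrapV t) R 1 x = ∑ i : ZMod t,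
      ((Finsupp.single ![.mid i] (α i) - Finsupp.single ![.top] (α i))
       + (Finsupp.single ![.upp i] (β0 i) - Finsupp.single ![.mid i] (β0 i))
       + (Finsupp.single ![.upp (i+1)] (β1 i) - Finsupp.single ![.mid i] (β1 i))
       + (Finsupp.single ![.head] (γ i) - Finsupp.single ![.upp i] (γ i))) := by
    rw [hxe, map_sum]
    refine Finset.sum_congr rfl fun i _ => ?_
    simp only [he0, he1, he2, he3]
    rw [map_add, map_add, map_add, bdry1, bdry1, bdry1, bdry1]
  have hzero : ∀ pt : Fin 1 → TrapV t, (∑ i : ZMod t,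
      ((Finsupp.single ![.mid i] (α i) - Finsupp.single ![.top] (α i))
       + (Finsupp.single ![.upp i] (β0 i) - Finsupp.single ![.mid i] (β0 i))
       + (Finsupp.single ![.upp (i+1)] (β1 i) - Finsupp.single ![.mid i] (β1 i))
       + (Finsupp.single ![.head] (γ i) - Finsupp.single ![.upp i] (γ i)))
      : (Fin 1 → TrapV t) →₀ R) pt = 0 := by
    intro pt
    rw [← hbd, hb]
    rfl
  -- equations
  have hM : ∀ j : ZMod t, α j + -(β0 j) + -(β1 j) = 0 := by
    intro j
    have := hzero ![.mid j]
    rw [Finsupp.finset_sum_apply] at this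
    rw [← this]
    refine (sum_eq_three_coeff _ j j j (fun i => α i) (fun i => -(β0 i)) (fun i => -(β1 i))
      (fun i => ?_)).symm
    by_cases hij : i = j
    · subst hij
      simp [Finsupp.sub_apply, Finsupp.add_apply, Finsupp.single_apply, vec1_eq_iff]
    · simp [Finsupp.sub_apply, Finsupp.add_apply, Finsupp.single_apply, vec1_eq_iff, hij]
  have hU : ∀ j : ZMod t, β0 j + β1 (j-1) + -(γ j) = 0 := by
    intro j
    have := hzero ![.upp j]
    rw [Finsupp.finset_sum_apply] at this
    rw [← this]
    refine (sum_eq_three_coeff _ j (j-1) j (fun i => β0 i) (fun i => β1 i) (fun i => -(γ i))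
      (fun i => ?_)).symm
    by_cases hij : i = j
    · subst hij
      by_cases hij2 : i = i - 1
      · exact absurd hij2.symm (by
          intro hc
          exact one_ne_zero (by linear_combination -hc : (1 : ZMod t) = 0))
      · simp [Finsupp.sub_apply, Finsupp.add_apply, Finsupp.single_apply, vec1_eq_iff, hij2,
          sub_eq_iff_eq_add]
    · by_cases hij2 : i = j - 1
      · subst hij2
        simp [Finsupp.sub_apply, Finsupp.add_apply, Finsupp.single_apply, vec1_eq_iff, hij,
          sub_add_cancel]
      · have h3 : ¬ (i + 1 = j) := fun hc => hij2 (by linear_combination hc)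
        simp [Finsupp.sub_apply, Finsupp.add_apply, Finsupp.single_apply, vec1_eq_iff, hij,
          hij2, h3]
  have hT : ∑ z : ZMod t, α z = 0 := by
    have := hzero ![.top]
    rw [Finsupp.finset_sum_apply] at this
    rw [Finset.sum_congr rfl (fun i (_ : i ∈ Finset.univ) =>
      (by simp [Finsupp.sub_apply, Finsupp.add_apply, Finsupp.single_apply, vec1_eq_iff] :
        ((Finsupp.single ![.mid i] (α i) - Finsupp.single ![.top] (α i))
         + (Finsupp.single ![.upp i] (β0 i) - Finsupp.single ![.mid i] (β0 i))
         + (Finsupp.single ![.upp (i+1)] (β1 i) - Finsupp.single ![.mid i] (β1 i))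
         + (Finsupp.single ![.head] (γ i) - Finsupp.single ![.upp i] (γ i))
         : (Fin 1 → TrapV t) →₀ R) ![.top] = -(α i)))] at this
    rw [Finset.sum_neg_distrib] at this
    linear_combination -this
  -- construction of the primitive
  set s : ZMod t → R := fun z => -(∑ k ∈ Finset.range z.val, α (k : ZMod t)) with hsdef
  have hrange : ∑ k ∈ Finset.range t, α (k : ZMod t) = 0 := by
    have hbij := Fintype.sum_bijective _ natCast_bij (fun i : Fin t => α ((i : ℕ) : ZMod t)) α
      (fun i => rfl)
    rw [← hT, ← hbij, Fin.sum_univ_eq_sum_range (fun k => α ((k : ℕ) : ZMod t)) t]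
  have hs : ∀ j : ZMod t, s (j + 1) = s j - α j := by
    intro j
    have hvlt := ZMod.val_lt j
    have hv : (j + 1).val = (j.val + 1) % t := by rw [ZMod.val_add, ZMod.val_one]
    have hjc : ((j.val : ℕ) : ZMod t) = j := ZMod.natCast_rightInverse j
    by_cases hlt : j.val + 1 < t
    · simp only [hsdef]
      rw [hv, Nat.mod_eq_of_lt hlt, Finset.sum_range_succ, hjc]
      ring
    · have heq : j.val + 1 = t := by omega
      simp only [hsdef]
      rw [hv, heq, Nat.mod_self, Finset.range_zero, Finset.sum_empty]
      have h2 : ∑ k ∈ Finset.range (j.val + 1), α ((k : ℕ) : ZMod t) = 0 := by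
        rw [heq]; exact hrange
      rw [Finset.sum_range_succ, hjc] at h2
      linear_combination h2
  set r : ZMod t → R := fun i => β0 i - s i with hrdef
  have hsα : ∀ i : ZMod t, s i - s (i+1) = α i := fun i => by linear_combination -hs i
  have hcβ0 : ∀ i : ZMod t, s i + r i = β0 i := fun i => by simp only [hrdef]; ring
  have hcβ1 : ∀ i : ZMod t, -(s (i+1)) - r i = β1 i := fun i => by
    simp only [hrdef]
    linear_combination -hs i + hM i
  have hcγ : ∀ i : ZMod t, r i - r (i-1) = γ i := by
    intro i
    have e : i - 1 + 1 = i := by ring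
    have hh1 := hs (i-1)
    rw [e] at hh1
    have hh2 := hM (i-1)
    have hh3 := hU i
    simp only [hrdef]
    linear_combination -hh1 + hh2 + hh3
  -- the candidate y and its boundary
  have hbdy : pathBoundary (TrapV t) R 2 (∑ i : ZMod t,
      (Finsupp.single ![TrapV.top, .mid i, .upp i] (s i)
        - Finsupp.single ![TrapV.top, .mid i, .upp (i+1)] (s (i+1))
        + Finsupp.single ![TrapV.mid i, .upp i, .head] (r i)
        - Finsupp.single ![TrapV.mid i, .upp (i+1), .head] (r i)))
      = ∑ i : ZMod t,
      (Finsupp.single ![TrapV.top, .mid i] (α i) + Finsupp.single ![TrapV.mid i, .upp i] (β0 i)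
       + Finsupp.single ![TrapV.mid i, .upp (i+1)] (β1 i)
       + Finsupp.single ![TrapV.upp i, .head] (γ i)) := by
    rw [map_sum]
    have hterm : ∀ i ∈ Finset.univ, pathBoundary (TrapV t) R 2
        (Finsupp.single ![TrapV.top, .mid i, .upp i] (s i)
          - Finsupp.single ![TrapV.top, .mid i, .upp (i+1)] (s (i+1))
          + Finsupp.single ![TrapV.mid i, .upp i, .head] (r i)
          - Finsupp.single ![TrapV.mid i, .upp (i+1), .head] (r i)) =
        ((Finsupp.single ![TrapV.top, .mid i] (α i)
          + Finsupp.single ![TrapV.mid i, .upp i] (β0 i)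
          + Finsupp.single ![TrapV.mid i, .upp (i+1)] (β1 i)
          + Finsupp.single ![TrapV.upp i, .head] (γ i))
         + (Finsupp.single ![TrapV.top, .upp (i+1)] (s (i+1))
            - Finsupp.single ![TrapV.top, .upp i] (s i))
         + (Finsupp.single ![TrapV.upp i, .head] (r (i-1))
            - Finsupp.single ![TrapV.upp (i+1), .head] (r ((i+1)-1)))) := by
      intro i _
      have e : i + 1 - 1 = i := by ring
      rw [map_sub, map_add, map_sub,
        bdry2 R _ _ _ _ (by simp) (by simp) (by simp),
        bdry2 R _ _ _ _ (by simp) (by simp) (by simp),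
        bdry2 R _ _ _ _ (by simp) (by simp) (by simp),
        bdry2 R _ _ _ _ (by simp) (by simp) (by simp),
        ← hsα i, ← hcβ0 i, ← hcβ1 i, ← hcγ i, e]
      simp only [Finsupp.single_sub, Finsupp.single_add, Finsupp.single_neg]
      abel
    rw [Finset.sum_congr rfl hterm, Finset.sum_add_distrib, Finset.sum_add_distrib,
      Finset.sum_sub_distrib, Finset.sum_sub_distrib,
      zsum_shift (fun i => Finsupp.single ![TrapV.top, .upp i] (s i)),
      zsum_shift (fun i => Finsupp.single ![TrapV.upp i, .head] (r (i-1)))]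
    abel
  refine ⟨∑ i : ZMod t,
      (Finsupp.single ![TrapV.top, .mid i, .upp i] (s i)
        - Finsupp.single ![TrapV.top, .mid i, .upp (i+1)] (s (i+1))
        + Finsupp.single ![TrapV.mid i, .upp i, .head] (r i)
        - Finsupp.single ![TrapV.mid i, .upp (i+1), .head] (r i)), ?_, ?_⟩
  · rw [Omega, Submodule.mem_inf]
    constructor
    · rw [Finsupp.mem_supported']
      intro p hp
      rw [Finsupp.finset_sum_apply]
      refine Finset.sum_eq_zero fun i _ => ?_
      simp only [Finsupp.sub_apply, Finsupp.add_apply]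
      rw [Finsupp.single_eq_of_ne'
          (fun h => hp (by rw [← h]; exact allowed_vec2 trivial (Or.inl rfl))),
        Finsupp.single_eq_of_ne'
          (fun h => hp (by rw [← h]; exact allowed_vec2 trivial (Or.inr rfl))),
        Finsupp.single_eq_of_ne'
          (fun h => hp (by rw [← h]; exact allowed_vec2 (Or.inl rfl) trivial)),
        Finsupp.single_eq_of_ne'
          (fun h => hp (by rw [← h]; exact allowed_vec2 (Or.inr rfl) trivial))]
      simp
    · rw [Submodule.mem_comap, Finsupp.mem_supported', hbdy]
      intro q hq
      rw [Finsupp.finset_sum_apply]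
      refine Finset.sum_eq_zero fun i _ => ?_
      simp only [Finsupp.add_apply]
      rw [Finsupp.single_eq_of_ne'
          (fun h => hq (by rw [← h]; exact allowedLow2_vec trivial)),
        Finsupp.single_eq_of_ne'
          (fun h => hq (by rw [← h]; exact allowedLow2_vec (Or.inl rfl))),
        Finsupp.single_eq_of_ne'
          (fun h => hq (by rw [← h]; exact allowedLow2_vec (Or.inr rfl))),
        Finsupp.single_eq_of_ne'
          (fun h => hq (by rw [← h]; exact allowedLow2_vec trivial))]
      simp
  · rw [hbdy, hxe]
end

/-- For the trapezohedron `𝕋_t` of order `t ≥ 2`, the module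
`Ω_3(𝕋_t;R)` is free of rank one, generated by the trapezohedron element, and the path
homology `H^P_n(𝕋_t;R)` vanishes for all `n ≥ 1` (every `n`-cycle of path chains is the
boundary of a path chain). -/
theorem trapezohedron_Omega_three (t : ℕ) (ht : 2 ≤ t) (R : Type) [CommRing R] :
    Omega (TrapV t) (TrapE t) R 3 = Submodule.span R {trapGen t R} ∧
    (∀ r : R, r • trapGen t R = 0 → r = 0) ∧
    (∀ n : ℕ, 1 ≤ n → ∀ x ∈ Omega (TrapV t) (TrapE t) R n,
      pathBoundary (TrapV t) R n x = 0 →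
        ∃ y ∈ Omega (TrapV t) (TrapE t) R (n+1), pathBoundary (TrapV t) R (n+1) y = x) := by
  haveI : NeZero t := ⟨by omega⟩
  haveI : Fact (1 < t) := ⟨by omega⟩
  refine ⟨?_, ?_, ?_⟩
  · apply le_antisymm
    · intro x hx
      rw [omega3_eq ht x hx]
      exact Submodule.smul_mem _ _ (Submodule.mem_span_singleton_self _)
    · exact Submodule.span_le.mpr (Set.singleton_subset_iff.mpr trapGen_mem)
  · intro r hr
    have h := DFunLike.congr_fun hr ![TrapV.top, .mid 0, .upp 0, .head]
    rw [Finsupp.smul_apply, trapGen_coeff, smul_eq_mul, mul_one] at h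
    simpa using h
  · intro n hn x hx hbx
    by_cases h1 : n = 1
    · subst h1
      exact omega1_case ht x hx hbx
    · by_cases h2 : n = 2
      · subst h2
        exact omega2_case ht x hx hbx
      · by_cases h3 : n = 3
        · subst h3
          have hx3 := omega3_eq ht x hx
          rw [hx3, map_smul] at hbx
          have h := DFunLike.congr_fun hbx ![TrapV.mid 0, .upp 0, .head]
          rw [Finsupp.smul_apply, bdry_trapGen_coeff, smul_eq_mul, mul_one] at h
          have hr0 : x ![TrapV.top, .mid 0, .upp 0, .head] = 0 := by simpa using h
          refine ⟨0, Submodule.zero_mem _, ?_⟩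
          rw [map_zero, hx3, hr0, zero_smul]
        · have hx0 : x = 0 := omega_high_zero (by omega) x hx
          exact ⟨0, Submodule.zero_mem _, by rw [map_zero, hx0]⟩
end

section
/- In the trapezohedron 𝕋_2, the trapezohedron element generating Ω_3(𝕋_2;R) is the upper extension [S_1 − S_2]^H of the difference of directed squares S_1 = e_{T,u_1,v_1} − e_{T,u_2,v_1} and S_2 = e_{T,u_1,v_2} − e_{T,u_2,v_2}; i.e., [S_1 − S_2]^H = e_{T,u_1,v_1,H} − e_{T,u_2,v_1,H} − e_{T,u_1,v_2,H} + e_{T,u_2,v_2,H} ∈ Ω_3(𝕋_2;R). -/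
open Finsupp

open Classical in
/-- The upper extension `[x]^v`: append the vertex `v` to each path whose last vertex has an
edge to `v`; the remaining terms are discarded. -/
noncomputable def upperExt (V : Type) (E : V → V → Prop) (R : Type) [CommRing R]
    (v : V) (d : ℕ) :
    ((Fin (d+1) → V) →₀ R) →ₗ[R] ((Fin (d+2) → V) →₀ R) :=
  Finsupp.lsum R fun p : Fin (d+1) → V =>
    if E (p (Fin.last d)) v then Finsupp.lsingle (Fin.snoc p v)
    else (0 : R →ₗ[R] ((Fin (d+2) → V) →₀ R))

open Classical in
/-- The lower extension `[x]_v`: prepend the vertex `v` to each path whose first vertex is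
the target of an edge from `v`; the remaining terms are discarded. -/
noncomputable def lowerExt (V : Type) (E : V → V → Prop) (R : Type) [CommRing R]
    (v : V) (d : ℕ) :
    ((Fin (d+1) → V) →₀ R) →ₗ[R] ((Fin (d+2) → V) →₀ R) :=
  Finsupp.lsum R fun p : Fin (d+1) → V =>
    if E v (p 0) then Finsupp.lsingle (Fin.cons v p)
    else (0 : R →ₗ[R] ((Fin (d+2) → V) →₀ R))

instance (t : ℕ) : DecidableEq (TrapV t) := fun a b =>
  match a, b with
  | .top, .top => isTrue rfl
  | .head, .head => isTrue rfl
  | .mid i, .mid j => decidable_of_iff (i = j) (by simp [TrapV.mid.injEq])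
  | .upp i, .upp j => decidable_of_iff (i = j) (by simp [TrapV.upp.injEq])
  | .top, .mid _ => isFalse nofun
  | .top, .upp _ => isFalse nofun
  | .top, .head => isFalse nofun
  | .mid _, .top => isFalse nofun
  | .mid _, .upp _ => isFalse nofun
  | .mid _, .head => isFalse nofun
  | .upp _, .top => isFalse nofun
  | .upp _, .mid _ => isFalse nofun
  | .upp _, .head => isFalse nofun
  | .head, .top => isFalse nofun
  | .head, .mid _ => isFalse nofun
  | .head, .upp _ => isFalse nofun

instance (t : ℕ) (a b : TrapV t) : Decidable (TrapE t a b) := by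
  cases a <;> cases b <;> simp only [TrapE] <;> infer_instance

lemma trap_pathBoundary_single (R : Type) [CommRing R] (a b : ZMod 2) (r : R) :
    pathBoundary (TrapV 2) R 3
        (Finsupp.single ![TrapV.top, TrapV.mid a, TrapV.upp b, TrapV.head] r) =
    Finsupp.single ![TrapV.mid a, TrapV.upp b, TrapV.head] r
      - Finsupp.single ![TrapV.top, TrapV.upp b, TrapV.head] r
      + Finsupp.single ![TrapV.top, TrapV.mid a, TrapV.head] r
      - Finsupp.single ![TrapV.top, TrapV.mid a, TrapV.upp b] r := by
  simp only [pathBoundary, LinearMap.sum_apply, LinearMap.smul_apply, LinearMap.add_apply,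
    LinearMap.zero_apply, Fin.sum_univ_succ, Fin.sum_univ_zero, Finsupp.lsum_single]
  rw [if_pos (show IsRegularLow (TrapV 2) 3 (![TrapV.top, TrapV.mid a, TrapV.upp b, TrapV.head] ∘ Fin.succAbove 0) by intro j; fin_cases j <;> simp [Fin.succAbove, Fin.lt_def, Fin.castSucc, Fin.castAdd, Fin.castLE]),
      if_pos (show IsRegularLow (TrapV 2) 3 (![TrapV.top, TrapV.mid a, TrapV.upp b, TrapV.head] ∘ (Fin.succ 0).succAbove) by intro j; fin_cases j <;> simp [Fin.succAbove, Fin.lt_def, Fin.castSucc, Fin.castAdd, Fin.castLE]),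
      if_pos (show IsRegularLow (TrapV 2) 3 (![TrapV.top, TrapV.mid a, TrapV.upp b, TrapV.head] ∘ (Fin.succ 0).succ.succAbove) by intro j; fin_cases j <;> simp [Fin.succAbove, Fin.lt_def, Fin.castSucc, Fin.castAdd, Fin.castLE]),
      if_pos (show IsRegularLow (TrapV 2) 3 (![TrapV.top, TrapV.mid a, TrapV.upp b, TrapV.head] ∘ (Fin.succ 0).succ.succ.succAbove) by intro j; fin_cases j <;> simp [Fin.succAbove, Fin.lt_def, Fin.castSucc, Fin.castAdd, Fin.castLE])]
  rw [show (![TrapV.top, TrapV.mid a, TrapV.upp b, TrapV.head] ∘ Fin.succAbove 0) = ![TrapV.mid a, TrapV.upp b, TrapV.head] from by funext j; fin_cases j <;> rfl,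
      show (![TrapV.top, TrapV.mid a, TrapV.upp b, TrapV.head] ∘ (Fin.succ 0).succAbove) = ![TrapV.top, TrapV.upp b, TrapV.head] from by funext j; fin_cases j <;> rfl,
      show (![TrapV.top, TrapV.mid a, TrapV.upp b, TrapV.head] ∘ (Fin.succ 0).succ.succAbove) = ![TrapV.top, TrapV.mid a, TrapV.head] from by funext j; fin_cases j <;> rfl,
      show (![TrapV.top, TrapV.mid a, TrapV.upp b, TrapV.head] ∘ (Fin.succ 0).succ.succ.succAbove) = ![TrapV.top, TrapV.mid a, TrapV.upp b] from by funext j; fin_cases j <;> rfl]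
  simp [Finsupp.lsingle_apply, pow_succ]
  abel

/-- In the trapezohedron `𝕋_2` (here `u_1 = mid 1`, `u_2 = mid 0`,
`v_1 = upp 1`, `v_2 = upp 0`), the trapezohedron element generating `Ω_3(𝕋_2;R)` is the
upper extension `[S₁ − S₂]^H` of the difference of the directed squares
`S₁ = e_{T,u₁,v₁} − e_{T,u₂,v₁}` and `S₂ = e_{T,u₁,v₂} − e_{T,u₂,v₂}`:
`[S₁ − S₂]^H = e_{T,u₁,v₁,H} − e_{T,u₂,v₁,H} − e_{T,u₁,v₂,H} + e_{T,u₂,v₂,H} ∈ Ω_3(𝕋_2;R)`. -/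
theorem trapezohedron_two_upperExt (R : Type) [CommRing R] :
    upperExt (TrapV 2) (TrapE 2) R TrapV.head 2
        ((Finsupp.single ![TrapV.top, TrapV.mid 1, TrapV.upp 1] (1 : R) -
          Finsupp.single ![TrapV.top, TrapV.mid 0, TrapV.upp 1] 1) -
         (Finsupp.single ![TrapV.top, TrapV.mid 1, TrapV.upp 0] 1 -
          Finsupp.single ![TrapV.top, TrapV.mid 0, TrapV.upp 0] 1)) =
      Finsupp.single ![TrapV.top, TrapV.mid 1, TrapV.upp 1, TrapV.head] 1 -
        Finsupp.single ![TrapV.top, TrapV.mid 0, TrapV.upp 1, TrapV.head] 1 -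
        Finsupp.single ![TrapV.top, TrapV.mid 1, TrapV.upp 0, TrapV.head] 1 +
        Finsupp.single ![TrapV.top, TrapV.mid 0, TrapV.upp 0, TrapV.head] 1 ∧
    Finsupp.single ![TrapV.top, TrapV.mid 1, TrapV.upp 1, TrapV.head] (1 : R) -
        Finsupp.single ![TrapV.top, TrapV.mid 0, TrapV.upp 1, TrapV.head] 1 -
        Finsupp.single ![TrapV.top, TrapV.mid 1, TrapV.upp 0, TrapV.head] 1 +
        Finsupp.single ![TrapV.top, TrapV.mid 0, TrapV.upp 0, TrapV.head] 1
      ∈ Omega (TrapV 2) (TrapE 2) R 3 := by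
  constructor
  · simp only [upperExt, map_sub, Finsupp.lsum_single]
    rw [if_pos (by decide), if_pos (by decide), if_pos (by decide), if_pos (by decide)]
    rw [show (Fin.snoc ![TrapV.top, TrapV.mid (1:ZMod 2), TrapV.upp 1] TrapV.head) = ![TrapV.top, TrapV.mid 1, TrapV.upp 1, TrapV.head] from by decide,
       show (Fin.snoc ![TrapV.top, TrapV.mid (0:ZMod 2), TrapV.upp 1] TrapV.head) = ![TrapV.top, TrapV.mid 0, TrapV.upp 1, TrapV.head] from by decide,
       show (Fin.snoc ![TrapV.top, TrapV.mid (1:ZMod 2), TrapV.upp 0] TrapV.head) = ![TrapV.top, TrapV.mid 1, TrapV.upp 0, TrapV.head] from by decide,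
       show (Fin.snoc ![TrapV.top, TrapV.mid (0:ZMod 2), TrapV.upp 0] TrapV.head) = ![TrapV.top, TrapV.mid 0, TrapV.upp 0, TrapV.head] from by decide]
    simp [Finsupp.lsingle_apply]
    abel
  · rw [Omega, Submodule.mem_inf, Submodule.mem_comap]
    constructor
    · refine add_mem (sub_mem (sub_mem ?_ ?_) ?_) ?_ <;>
        exact Finsupp.single_mem_supported R 1
          (show IsAllowed (TrapV 2) (TrapE 2) 3 _ by unfold IsAllowed; decide)
    · have hB : pathBoundary (TrapV 2) R 3
          (Finsupp.single ![TrapV.top, TrapV.mid 1, TrapV.upp 1, TrapV.head] (1 : R) -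
            Finsupp.single ![TrapV.top, TrapV.mid 0, TrapV.upp 1, TrapV.head] 1 -
            Finsupp.single ![TrapV.top, TrapV.mid 1, TrapV.upp 0, TrapV.head] 1 +
            Finsupp.single ![TrapV.top, TrapV.mid 0, TrapV.upp 0, TrapV.head] 1) =
          (Finsupp.single ![TrapV.mid 1, TrapV.upp 1, TrapV.head] (1 : R)
            - Finsupp.single ![TrapV.mid 0, TrapV.upp 1, TrapV.head] 1
            - Finsupp.single ![TrapV.mid 1, TrapV.upp 0, TrapV.head] 1
            + Finsupp.single ![TrapV.mid 0, TrapV.upp 0, TrapV.head] 1)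
          - (Finsupp.single ![TrapV.top, TrapV.mid 1, TrapV.upp 1] 1
            - Finsupp.single ![TrapV.top, TrapV.mid 0, TrapV.upp 1] 1
            - Finsupp.single ![TrapV.top, TrapV.mid 1, TrapV.upp 0] 1
            + Finsupp.single ![TrapV.top, TrapV.mid 0, TrapV.upp 0] 1) := by
        simp only [map_add, map_sub, trap_pathBoundary_single]
        abel
      rw [hB]
      refine sub_mem (add_mem (sub_mem (sub_mem ?_ ?_) ?_) ?_)
        (add_mem (sub_mem (sub_mem ?_ ?_) ?_) ?_) <;>
        exact Finsupp.single_mem_supported R 1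
          (show IsAllowedLow (TrapV 2) (TrapE 2) 3 _ by unfold IsAllowedLow; decide)
end
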